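/- arXiv:math/0306301 — 5 statements merged into one kernel-verified Lean document; each statement's English description precedes it below -/
import Mathlib

section
/- Let Φ = (A; A*; {E_i}; {E*_i}) be a Leonard system of diameter d in a K-algebra 𝒜 isomorphic to Mat_{d+1}(K). Then the (d+1)^2 elements A^r E*_0 A^s for 0 ≤ r, s ≤ d form a basis of the K-vector space 𝒜. -/
/-
`E*_0` has rank one: `d + 1` nonzero orthogonal idempotents summing to `1` split a
`(d + 1)`-dimensional space into lines. The tridiagonality of `A` with respect to the `E*_i`
gives `E*_i A^r E*_j = 0` for `r < |i - j|`, and, composing through the rank-one `E*_k` along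
a shortest path, `E*_i A^r E*_j ≠ 0` for `r = |i - j|`. Hence `E*_i (A^r E*_0 A^s) E*_j`
vanishes unless `i ≤ r` and `j ≤ s`, and is nonzero for `(r, s) = (i, j)`; this triangularity
makes the `(d + 1)^2` elements independent, and they are as many as `dim 𝒜`.
-/

open Matrix Polynomial

def IsTridiag {K : Type*} [Field K] {n : ℕ} (M : Matrix (Fin n) (Fin n) K) : Prop :=
  ∀ i j : Fin n, ((i : ℕ) + 1 < j ∨ (j : ℕ) + 1 < i) → M i j = 0

def IsIrredTridiag {K : Type*} [Field K] {n : ℕ} (M : Matrix (Fin n) (Fin n) K) : Prop :=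
  IsTridiag M ∧ ∀ i j : Fin n, ((i : ℕ) + 1 = j ∨ (j : ℕ) + 1 = i) → M i j ≠ 0

/-- Entry of a matrix with natural-number indices; `0` when out of range. -/
def mentry {K : Type*} [Field K] {n : ℕ} (M : Matrix (Fin n) (Fin n) K) (i j : ℕ) : K :=
  if h : i < n ∧ j < n then M ⟨i, h.1⟩ ⟨j, h.2⟩ else 0

/-- A family indexed by `Fin (d+1)` viewed as indexed by `ℕ`, with value `0` out of range. -/
def natIdx {d : ℕ} {M : Type*} [Zero M] (E : Fin (d+1) → M) (n : ℕ) : M :=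
  if h : n < d + 1 then E ⟨n, h⟩ else 0

/-- A Leonard system of diameter `d` in the matrix algebra `Mat_{d+1}(K)`:
`A`, `As` are multiplicity-free with eigenvalues `θ i`, `θs i` and primitive
idempotents `E i`, `Es i`, satisfying the tridiagonal conditions. -/
structure LeonardSystem (K : Type*) [Field K] (d : ℕ) where
  A : Matrix (Fin (d+1)) (Fin (d+1)) K
  As : Matrix (Fin (d+1)) (Fin (d+1)) K
  E : Fin (d+1) → Matrix (Fin (d+1)) (Fin (d+1)) K
  Es : Fin (d+1) → Matrix (Fin (d+1)) (Fin (d+1)) K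
  θ : Fin (d+1) → K
  θs : Fin (d+1) → K
  θ_inj : Function.Injective θ
  θs_inj : Function.Injective θs
  E_ne : ∀ i, E i ≠ 0
  Es_ne : ∀ i, Es i ≠ 0
  E_mul : ∀ i j, E i * E j = if i = j then E i else 0
  Es_mul : ∀ i j, Es i * Es j = if i = j then Es i else 0
  E_sum : ∑ i, E i = 1
  Es_sum : ∑ i, Es i = 1
  A_eq : A = ∑ i, θ i • E i
  As_eq : As = ∑ i, θs i • Es i
  EAsE_zero : ∀ i j : Fin (d+1), ((i:ℕ) + 1 < j ∨ (j:ℕ) + 1 < i) → E i * As * E j = 0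
  EAsE_ne : ∀ i j : Fin (d+1), ((i:ℕ) + 1 = j ∨ (j:ℕ) + 1 = i) → E i * As * E j ≠ 0
  EsAEs_zero : ∀ i j : Fin (d+1), ((i:ℕ) + 1 < j ∨ (j:ℕ) + 1 < i) → Es i * A * Es j = 0
  EsAEs_ne : ∀ i j : Fin (d+1), ((i:ℕ) + 1 = j ∨ (j:ℕ) + 1 = i) → Es i * A * Es j ≠ 0

/-- A Leonard pair in `Mat_{d+1}(K)`. -/
structure LeonardPair (K : Type*) [Field K] (d : ℕ) where
  A : Matrix (Fin (d+1)) (Fin (d+1)) K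
  As : Matrix (Fin (d+1)) (Fin (d+1)) K
  cond1 : ∃ P : Matrix (Fin (d+1)) (Fin (d+1)) K, IsUnit P ∧
    IsIrredTridiag (P⁻¹ * A * P) ∧ (P⁻¹ * As * P).IsDiag
  cond2 : ∃ P : Matrix (Fin (d+1)) (Fin (d+1)) K, IsUnit P ∧
    (P⁻¹ * A * P).IsDiag ∧ IsIrredTridiag (P⁻¹ * As * P)

theorem LinearIndependent.of_apply_eq_zero_of_not_le {K M N ι : Type*} [Field K]
    [AddCommGroup M] [Module K M] [AddCommGroup N] [Module K N] [Fintype ι] [PartialOrder ι]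
    {f : ι → M} (g : ι → M →ₗ[K] N) (hzero : ∀ i j, ¬ i ≤ j → g i (f j) = 0)
    (hdiag : ∀ i, g i (f i) ≠ 0) : LinearIndependent K f := by
  classical
  rw [Fintype.linearIndependent_iff]
  intro c hc
  by_contra! hne
  obtain ⟨i, hi, hmax⟩ :=
    (Finset.univ.filter (c · ≠ 0)).exists_maximal (by simpa [Finset.Nonempty] using hne)
  have hgi : ∑ j, c j • g i (f j) = 0 := by simpa using congrArg (g i) hc
  rw [Finset.sum_eq_single i] at hgi
  · exact hdiag i ((smul_eq_zero.mp hgi).resolve_left (Finset.mem_filter.mp hi).2)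
  · intro j _ hji
    by_cases hcj : c j = 0
    · rw [hcj, zero_smul]
    by_cases hij : i ≤ j
    · exact absurd (le_antisymm (hmax (by simpa using hcj) hij) hij) hji
    · rw [hzero i j hij, smul_zero]
  · simp

section Tridiagonal

variable {R : Type*} [Semiring R] {n : ℕ} {F : Fin n → R} {B : R}

theorem CompleteOrthogonalIdempotents.mul_pow_succ_mul (hF : CompleteOrthogonalIdempotents F)
    (r : ℕ) (i j : Fin n) : F i * B ^ (r + 1) * F j = ∑ k, F i * B * F k * (B ^ r * F j) := by
  rw [← Finset.sum_mul, ← Finset.mul_sum, hF.complete, mul_one, pow_succ']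
  simp only [mul_assoc]

theorem CompleteOrthogonalIdempotents.mul_pow_mul_eq_zero (hF : CompleteOrthogonalIdempotents F)
    (hB : ∀ i j : Fin n, ((i : ℕ) + 1 < j ∨ (j : ℕ) + 1 < i) → F i * B * F j = 0) :
    ∀ (r : ℕ) (i j : Fin n), ((i : ℕ) + r < j ∨ (j : ℕ) + r < i) → F i * B ^ r * F j = 0
  | 0, i, j, hij => by
    rw [pow_zero, mul_one]
    exact hF.ortho fun h => by subst h; omega
  | r + 1, i, j, hij => by
    rw [hF.mul_pow_succ_mul]
    refine Finset.sum_eq_zero fun k _ => ?_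
    by_cases hik : (i : ℕ) + 1 < k ∨ (k : ℕ) + 1 < i
    · rw [hB i k hik, zero_mul]
    · rw [mul_assoc (F i * B), ← mul_assoc (F k), hF.mul_pow_mul_eq_zero hB r k j (by omega),
        mul_zero]

theorem CompleteOrthogonalIdempotents.mul_pow_mul_ne_zero (hF : CompleteOrthogonalIdempotents F)
    (hne : ∀ i, F i ≠ 0)
    (hB : ∀ i j : Fin n, ((i : ℕ) + 1 < j ∨ (j : ℕ) + 1 < i) → F i * B * F j = 0)
    (hBadj : ∀ i j : Fin n, ((i : ℕ) + 1 = j ∨ (j : ℕ) + 1 = i) → F i * B * F j ≠ 0)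
    (hrankOne : ∀ k X Y, X * F k ≠ 0 → F k * Y ≠ 0 → X * F k * Y ≠ 0) :
    ∀ (r : ℕ) (i j : Fin n), ((i : ℕ) + r = j ∨ (j : ℕ) + r = i) → F i * B ^ r * F j ≠ 0
  | 0, i, j, hij => by
    obtain rfl : i = j := Fin.ext (by omega)
    rw [pow_zero, mul_one, (hF.idem i).eq]
    exact hne i
  | r + 1, i, j, hij => by
    obtain ⟨k, hik, hkj⟩ : ∃ k : Fin n,
        ((i : ℕ) + 1 = k ∨ (k : ℕ) + 1 = i) ∧ ((k : ℕ) + r = j ∨ (j : ℕ) + r = k) := by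
      have := i.isLt
      have := j.isLt
      rcases hij with h | h
      · exact ⟨⟨i + 1, by omega⟩, by dsimp only; omega⟩
      · exact ⟨⟨i - 1, by omega⟩, by dsimp only; omega⟩
    rw [hF.mul_pow_succ_mul, Finset.sum_eq_single k]
    · refine hrankOne k _ _ (hBadj i k hik) ?_
      rw [← mul_assoc]
      exact hF.mul_pow_mul_ne_zero hne hB hBadj hrankOne r k j hkj
    · intro l _ hlk
      by_cases hil : (i : ℕ) + 1 < l ∨ (l : ℕ) + 1 < i
      · rw [hB i l hil, zero_mul]
      · rw [mul_assoc (F i * B), ← mul_assoc (F l), hF.mul_pow_mul_eq_zero hB r l j (by omega),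
          mul_zero]
    · simp

end Tridiagonal

open Module LinearMap

section EndRank

variable {K V ι : Type*} [Field K] [AddCommGroup V] [Module K V] [FiniteDimensional K V]
  [Fintype ι] {F : ι → End K V}

theorem CompleteOrthogonalIdempotents.sum_finrank_range_le (hF : CompleteOrthogonalIdempotents F) :
    ∑ i, finrank K (range (F i)) ≤ finrank K V := by
  let φ : V →ₗ[K] ((i : ι) → range (F i)) := LinearMap.pi fun i => (F i).rangeRestrict
  have hφ : Function.Surjective φ := by
    intro x
    choose w hw using fun i => (x i).2
    refine ⟨∑ j, F j (w j), funext fun i => Subtype.ext ?_⟩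
    change F i (∑ j, F j (w j)) = x i
    rw [map_sum, Finset.sum_eq_single i, ← Module.End.mul_apply, (hF.idem i).eq, hw]
    · intro j _ hji
      rw [← Module.End.mul_apply, hF.ortho hji.symm, LinearMap.zero_apply]
    · simp
  simpa [Module.finrank_pi_fintype] using LinearMap.finrank_le_finrank_of_surjective hφ

theorem CompleteOrthogonalIdempotents.finrank_range_eq_one (hF : CompleteOrthogonalIdempotents F)
    (hne : ∀ i, F i ≠ 0) (hcard : Fintype.card ι = finrank K V) (i : ι) :
    finrank K (range (F i)) = 1 := by
  have hpos : ∀ j, 1 ≤ finrank K (range (F j)) := fun j =>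
    Submodule.one_le_finrank_iff.mpr (by rw [Ne, range_eq_bot]; exact hne j)
  by_contra h
  have hlt : ∑ _j : ι, 1 < ∑ j, finrank K (range (F j)) :=
    Finset.sum_lt_sum (fun j _ => hpos j) ⟨i, Finset.mem_univ i, by have := hpos i; omega⟩
  have := hF.sum_finrank_range_le
  simp only [Finset.sum_const, Finset.card_univ, smul_eq_mul, mul_one] at hlt
  omega

theorem Module.End.mul_mul_ne_zero_of_finrank_range_eq_one {E X Y : End K V}
    (hE : finrank K (range E) = 1) (hX : X * E ≠ 0) (hY : E * Y ≠ 0) : X * E * Y ≠ 0 := by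
  have hEY : range (E * Y) = range E := by
    refine Submodule.eq_of_le_of_finrank_le (range_comp_le_range Y E) ?_
    rw [hE, Submodule.one_le_finrank_iff]
    rwa [Ne, range_eq_bot]
  rwa [Ne, ← range_eq_bot, mul_assoc, Module.End.mul_eq_comp X, range_comp, hEY, ← range_comp,
    ← Module.End.mul_eq_comp, range_eq_bot]

end EndRank

theorem Matrix.mul_mul_ne_zero_of_completeOrthogonalIdempotents {K n ι : Type*} [Field K]
    [Fintype n] [DecidableEq n] [Fintype ι] {F : ι → Matrix n n K}
    (hF : CompleteOrthogonalIdempotents F) (hne : ∀ i, F i ≠ 0)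
    (hcard : Fintype.card ι = Fintype.card n) (k : ι) {X Y : Matrix n n K}
    (hX : X * F k ≠ 0) (hY : F k * Y ≠ 0) : X * F k * Y ≠ 0 := by
  let e : Matrix n n K ≃+* End K (n → K) := toLinAlgEquiv'.toRingEquiv
  have hrank : finrank K (range (e (F k))) = 1 :=
    (hF.map e.toRingHom).finrank_range_eq_one
      (fun i => (map_ne_zero_iff _ e.injective).mpr (hne i))
      (by rw [Module.finrank_fintype_fun_eq_card, hcard]) k
  have := Module.End.mul_mul_ne_zero_of_finrank_range_eq_one hrank (X := e X) (Y := e Y)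
    (by rwa [← map_mul, map_ne_zero_iff _ e.injective])
    (by rwa [← map_mul, map_ne_zero_iff _ e.injective])
  rwa [← map_mul, ← map_mul, map_ne_zero_iff _ e.injective] at this

namespace LeonardSystem

variable {K : Type*} [Field K] {d : ℕ} (L : LeonardSystem K d)

theorem completeOrthogonalIdempotents_Es : CompleteOrthogonalIdempotents L.Es where
  idem i := (L.Es_mul i i).trans (if_pos rfl)
  ortho i j hij := by simpa [hij] using L.Es_mul i j
  complete := L.Es_sum

theorem Es_mul_mul_ne_zero (k : Fin (d + 1)) {X Y : Matrix (Fin (d + 1)) (Fin (d + 1)) K}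
    (hX : X * L.Es k ≠ 0) (hY : L.Es k * Y ≠ 0) : X * L.Es k * Y ≠ 0 :=
  Matrix.mul_mul_ne_zero_of_completeOrthogonalIdempotents L.completeOrthogonalIdempotents_Es
    L.Es_ne rfl k hX hY

theorem Es_mul_A_pow_mul_Es_eq_zero {r : ℕ} {i j : Fin (d + 1)}
    (h : (i : ℕ) + r < j ∨ (j : ℕ) + r < i) : L.Es i * L.A ^ r * L.Es j = 0 :=
  L.completeOrthogonalIdempotents_Es.mul_pow_mul_eq_zero L.EsAEs_zero r i j h

theorem Es_mul_A_pow_mul_Es_ne_zero {r : ℕ} {i j : Fin (d + 1)}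
    (h : (i : ℕ) + r = j ∨ (j : ℕ) + r = i) : L.Es i * L.A ^ r * L.Es j ≠ 0 :=
  L.completeOrthogonalIdempotents_Es.mul_pow_mul_ne_zero L.Es_ne L.EsAEs_zero L.EsAEs_ne
    L.Es_mul_mul_ne_zero r i j h

theorem Es_mul_mul_Es_eq (i j : Fin (d + 1)) (r s : ℕ) :
    L.Es i * (L.A ^ r * L.Es 0 * L.A ^ s) * L.Es j
      = L.Es i * L.A ^ r * L.Es 0 * (L.A ^ s * L.Es j) := by
  simp only [mul_assoc]

theorem Es_mul_A_pow_mul_Es_zero_mul_A_pow_mul_Es_eq_zero {i j : Fin (d + 1)} {r s : ℕ}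
    (h : r < i ∨ s < j) : L.Es i * (L.A ^ r * L.Es 0 * L.A ^ s) * L.Es j = 0 := by
  rw [Es_mul_mul_Es_eq]
  rcases h with hri | hsj
  · rw [L.Es_mul_A_pow_mul_Es_eq_zero (by rw [Fin.val_zero]; omega), zero_mul]
  · rw [mul_assoc (L.Es i * L.A ^ r), ← mul_assoc (L.Es 0),
      L.Es_mul_A_pow_mul_Es_eq_zero (by rw [Fin.val_zero]; omega), mul_zero]

theorem Es_mul_A_pow_mul_Es_zero_mul_A_pow_mul_Es_ne_zero (i j : Fin (d + 1)) :
    L.Es i * (L.A ^ (i : ℕ) * L.Es 0 * L.A ^ (j : ℕ)) * L.Es j ≠ 0 := by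
  rw [Es_mul_mul_Es_eq]
  refine L.Es_mul_mul_ne_zero 0 (L.Es_mul_A_pow_mul_Es_ne_zero (by simp)) ?_
  rw [← mul_assoc]
  exact L.Es_mul_A_pow_mul_Es_ne_zero (by simp)

theorem linearIndependent_A_pow_mul_Es_zero_mul_A_pow :
    LinearIndependent K
      (fun p : Fin (d + 1) × Fin (d + 1) => L.A ^ (p.1 : ℕ) * L.Es 0 * L.A ^ (p.2 : ℕ)) := by
  refine .of_apply_eq_zero_of_not_le
    (fun p => LinearMap.mulRight K (L.Es p.2) ∘ₗ LinearMap.mulLeft K (L.Es p.1)) ?_ ?_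
  · rintro ⟨i, j⟩ ⟨r, s⟩ hle
    rw [Prod.mk_le_mk, not_and_or, not_le, not_le] at hle
    exact L.Es_mul_A_pow_mul_Es_zero_mul_A_pow_mul_Es_eq_zero hle
  · rintro ⟨i, j⟩
    exact L.Es_mul_A_pow_mul_Es_zero_mul_A_pow_mul_Es_ne_zero i j

end LeonardSystem

theorem stmt3 {K : Type*} [Field K] {d : ℕ} (L : LeonardSystem K d) :
    LinearIndependent K
      (fun p : Fin (d+1) × Fin (d+1) => L.A ^ (p.1 : ℕ) * L.Es 0 * L.A ^ (p.2 : ℕ)) ∧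
    Submodule.span K
      (Set.range (fun p : Fin (d+1) × Fin (d+1) =>
        L.A ^ (p.1 : ℕ) * L.Es 0 * L.A ^ (p.2 : ℕ))) = ⊤ := by
  have hind := L.linearIndependent_A_pow_mul_Es_zero_mul_A_pow
  exact ⟨hind, hind.span_eq_top_of_card_eq_finrank (by simp [Module.finrank_matrix])⟩
end

section
/- Let Φ be a Leonard system in 𝒜 ≅ Mat_{d+1}(K) and let 𝒟 be the subalgebra of 𝒜 generated by A. If X, Y ∈ 𝒟 satisfy X E*_0 Y = 0, then X = 0 or Y = 0. -/
open Matrix Polynomial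

set_option linter.unusedVariables false

namespace LeonardSystem

variable {K : Type*} [Field K] {d : ℕ} (L : LeonardSystem K d)

lemma Es_idem (i : Fin (d+1)) : L.Es i * L.Es i = L.Es i := by
  simpa using L.Es_mul i i

lemma Es_orth {i j : Fin (d+1)} (h : i ≠ j) : L.Es i * L.Es j = 0 := by
  simpa [h] using L.Es_mul i j

lemma sum_Es_mul (s : Finset (Fin (d+1))) {j : Fin (d+1)} (hj : j ∈ s) (M : Matrix (Fin (d+1)) (Fin (d+1)) K) :
    L.Es j * ((∑ k ∈ s, L.Es k) * M) = L.Es j * M := by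
  rw [← Matrix.mul_assoc, Finset.mul_sum]
  rw [Finset.sum_congr rfl (fun k _ => L.Es_mul j k)]
  rw [Finset.sum_ite_eq s j (fun _ => L.Es j), if_pos hj]

lemma sum_Es_idem (s : Finset (Fin (d+1))) :
    (∑ j ∈ s, L.Es j) * (∑ j ∈ s, L.Es j) = ∑ j ∈ s, L.Es j := by
  rw [Finset.sum_mul_sum]
  rw [Finset.sum_congr rfl (fun j _ => Finset.sum_congr rfl (fun k _ => L.Es_mul j k))]
  exact Finset.sum_congr rfl (fun j hj => by
    rw [Finset.sum_ite_eq s j (fun _ => L.Es j), if_pos hj])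

lemma exists_mulVec_ne_zero' {n : ℕ} {M : Matrix (Fin n) (Fin n) K} (h : M ≠ 0) :
    ∃ x, M *ᵥ x ≠ 0 := by
  by_contra hc
  push_neg at hc
  apply h
  ext i j
  have := congrFun (hc (Pi.single j 1)) i
  simpa [Matrix.mulVec_single] using this

lemma one_le_rank {n : ℕ} {M : Matrix (Fin n) (Fin n) K} (h : M ≠ 0) : 1 ≤ M.rank := by
  rw [Nat.one_le_iff_ne_zero]
  intro h0
  obtain ⟨x, hx⟩ := exists_mulVec_ne_zero' h
  have hb : LinearMap.range M.mulVecLin = ⊥ := by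
    rw [← Submodule.finrank_eq_zero]
    exact h0
  have : M.mulVecLin = 0 := LinearMap.range_eq_bot.mp hb
  exact hx (by rw [← M.mulVecLin_apply, this]; rfl)

lemma mul_mul_ne_zero {n : ℕ} {e B C : Matrix (Fin n) (Fin n) K} (he : e * e = e)
    (hr : e.rank ≤ 1) (hB : B * e ≠ 0) (hC : e * C ≠ 0) : B * e * C ≠ 0 := by
  obtain ⟨x, hx⟩ := exists_mulVec_ne_zero' hB
  obtain ⟨y, hy⟩ := exists_mulVec_ne_zero' hC
  set u := e *ᵥ x with hu_def
  set w := e *ᵥ (C *ᵥ y) with hw_def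
  have hBu : B *ᵥ u ≠ 0 := by
    rw [hu_def, mulVec_mulVec]; exact hx
  have hu : u ≠ 0 := by
    intro h0; exact hBu (by rw [h0, mulVec_zero])
  have hw : w ≠ 0 := by
    rw [hw_def, mulVec_mulVec]
    intro h0
    exact hy (by rw [← mulVec_mulVec] at h0 ⊢; exact h0)
  have humem : u ∈ LinearMap.range e.mulVecLin := ⟨x, rfl⟩
  have hspan : Submodule.span K {u} = LinearMap.range e.mulVecLin := by
    apply Submodule.eq_of_le_of_finrank_le
    · rw [Submodule.span_singleton_le_iff_mem]; exact humem
    · rw [finrank_span_singleton hu]; exact hr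
  have hwmem : w ∈ Submodule.span K {u} := by
    rw [hspan]; exact ⟨C *ᵥ y, rfl⟩
  obtain ⟨c, hc⟩ := Submodule.mem_span_singleton.mp hwmem
  have hcne : c ≠ 0 := by
    intro h0; rw [h0, zero_smul] at hc; exact hw hc.symm
  intro hzero
  have hfin : (B * e * C) *ᵥ y = c • (B *ᵥ u) := by
    rw [← mulVec_mulVec, ← mulVec_mulVec, ← hw_def, ← hc, mulVec_smul]
  rw [hzero, zero_mulVec] at hfin
  exact smul_ne_zero hcne hBu hfin.symm

lemma rank_add_le_of_orth {n : ℕ} {B C : Matrix (Fin n) (Fin n) K}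
    (hB : B * B = B) (hC : C * C = C) (hBC : B * C = 0) (hCB : C * B = 0) :
    B.rank + C.rank ≤ (B + C).rank := by
  have hrB : LinearMap.range B.mulVecLin ≤ LinearMap.range (B + C).mulVecLin := by
    rintro x ⟨y, rfl⟩
    refine ⟨B.mulVecLin y, ?_⟩
    simp only [mulVecLin_apply, mulVec_mulVec, Matrix.add_mul, hB, hCB, add_zero]
  have hrC : LinearMap.range C.mulVecLin ≤ LinearMap.range (B + C).mulVecLin := by
    rintro x ⟨y, rfl⟩
    refine ⟨C.mulVecLin y, ?_⟩
    simp only [mulVecLin_apply, mulVec_mulVec, Matrix.add_mul, hC, hBC, zero_add]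
  have hdisj : LinearMap.range B.mulVecLin ⊓ LinearMap.range C.mulVecLin = ⊥ := by
    rw [Submodule.eq_bot_iff]
    rintro x ⟨⟨y, hy⟩, ⟨z, hz⟩⟩
    have h1 : B *ᵥ x = x := by
      rw [← hy]; simp only [mulVecLin_apply, mulVec_mulVec, hB]
    have h2 : B *ᵥ x = 0 := by
      rw [← hz]; simp only [mulVecLin_apply, mulVec_mulVec, hBC, zero_mulVec]
    rw [← h1, h2]
  have hsum := Submodule.finrank_sup_add_finrank_inf_eq
    (LinearMap.range B.mulVecLin) (LinearMap.range C.mulVecLin)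
  rw [hdisj, finrank_bot, add_zero] at hsum
  calc B.rank + C.rank = Module.finrank K
        ↥(LinearMap.range B.mulVecLin ⊔ LinearMap.range C.mulVecLin) := hsum.symm
    _ ≤ (B + C).rank := Submodule.finrank_mono (sup_le hrB hrC)

lemma rank_sum_le (s : Finset (Fin (d+1))) :
    ∑ j ∈ s, (L.Es j).rank ≤ (∑ j ∈ s, L.Es j).rank := by
  classical
  induction s using Finset.induction_on with
  | empty => simp
  | @insert a s ha ih =>
    rw [Finset.sum_insert ha, Finset.sum_insert ha]
    have horth1 : L.Es a * (∑ j ∈ s, L.Es j) = 0 := by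
      rw [Finset.mul_sum]
      refine Finset.sum_eq_zero fun j hj => L.Es_orth (fun h => ha (h ▸ hj))
    have horth2 : (∑ j ∈ s, L.Es j) * L.Es a = 0 := by
      rw [Finset.sum_mul]
      refine Finset.sum_eq_zero fun j hj => L.Es_orth (fun h => ha (h ▸ hj))
    calc (L.Es a).rank + ∑ j ∈ s, (L.Es j).rank
        ≤ (L.Es a).rank + (∑ j ∈ s, L.Es j).rank := by gcongr
      _ ≤ (L.Es a + ∑ j ∈ s, L.Es j).rank :=
          rank_add_le_of_orth (L.Es_idem a) (L.sum_Es_idem s) horth1 horth2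

lemma Es_rank_le_one (i : Fin (d+1)) : (L.Es i).rank ≤ 1 := by
  classical
  have htot : ∑ j, (L.Es j).rank ≤ d + 1 := by
    have h1 := L.rank_sum_le Finset.univ
    rw [L.Es_sum, Matrix.rank_one] at h1
    simpa using h1
  have hsplit : (L.Es i).rank + ∑ j ∈ Finset.univ.erase i, (L.Es j).rank
      = ∑ j, (L.Es j).rank :=
    Finset.add_sum_erase Finset.univ (fun j => (L.Es j).rank) (Finset.mem_univ i)
  have herase : d ≤ ∑ j ∈ Finset.univ.erase i, (L.Es j).rank := by
    calc d = ∑ _j ∈ Finset.univ.erase i, 1 := by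
            rw [Finset.sum_const, smul_eq_mul, mul_one, Finset.card_erase_of_mem (Finset.mem_univ i)]
            simp
      _ ≤ _ := Finset.sum_le_sum fun j _ => one_le_rank (L.Es_ne j)
  omega

lemma pow_eq (n : ℕ) : L.A ^ n = ∑ j, (L.θ j) ^ n • L.E j := by
  induction n with
  | zero => simpa using L.E_sum.symm
  | succ n ih =>
    rw [pow_succ, ih, L.A_eq, Finset.sum_mul_sum]
    have hterm : ∀ j i : Fin (d+1),
        ((L.θ j) ^ n • L.E j) * (L.θ i • L.E i) = if j = i then (L.θ j) ^ (n+1) • L.E j else 0 := by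
      intro j i
      rw [smul_mul_assoc, mul_smul_comm, L.E_mul, smul_smul]
      by_cases h : j = i
      · subst h; simp [pow_succ]
      · simp [h]
    rw [Finset.sum_congr rfl (fun j _ => Finset.sum_congr rfl (fun i _ => hterm j i))]
    exact Finset.sum_congr rfl (fun j _ => by
      rw [Finset.sum_ite_eq Finset.univ j (fun _ => (L.θ j) ^ (n+1) • L.E j), if_pos (Finset.mem_univ j)])

lemma aeval_eq (p : K[X]) : aeval L.A p = ∑ j, p.eval (L.θ j) • L.E j := by
  rw [Polynomial.aeval_eq_sum_range]
  simp_rw [L.pow_eq, Finset.smul_sum, smul_smul]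
  rw [Finset.sum_comm]
  refine Finset.sum_congr rfl fun j _ => ?_
  rw [Polynomial.eval_eq_sum_range, Finset.sum_smul]

lemma middle_expand (M N : Matrix (Fin (d+1)) (Fin (d+1)) K) :
    M * N = ∑ i, (M * L.Es i) * (L.Es i * N) := by
  calc M * N = M * ((∑ i, L.Es i) * N) := by rw [L.Es_sum, one_mul]
    _ = ∑ i, M * (L.Es i * N) := by rw [Finset.sum_mul, Finset.mul_sum]
    _ = ∑ i, (M * L.Es i) * (L.Es i * N) := by
        refine Finset.sum_congr rfl fun i _ => ?_
        conv_lhs => rw [← L.Es_idem i]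
        rw [Matrix.mul_assoc, Matrix.mul_assoc]

lemma tri_left : ∀ (k : ℕ) (j : Fin (d+1)), k < (j:ℕ) → L.Es j * L.A ^ k * L.Es 0 = 0 := by
  intro k
  induction k with
  | zero =>
    intro j hj
    rw [pow_zero, mul_one]
    exact L.Es_orth (fun h => by simp [h] at hj)
  | succ k ih =>
    intro j hj
    have h1 : L.Es j * L.A ^ (k+1) * L.Es 0 = (L.Es j * L.A) * (L.A ^ k * L.Es 0) := by
      rw [pow_succ']; simp only [Matrix.mul_assoc]
    rw [h1, L.middle_expand]
    refine Finset.sum_eq_zero fun i _ => ?_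
    by_cases hlt : (i:ℕ) + 1 < (j:ℕ)
    · rw [L.EsAEs_zero j i (Or.inr hlt), zero_mul]
    · have hk : k < (i:ℕ) := by omega
      have h2 : L.Es i * (L.A ^ k * L.Es 0) = 0 := by
        rw [← Matrix.mul_assoc]; exact ih i hk
      rw [h2, mul_zero]

lemma tri_right : ∀ (k : ℕ) (j : Fin (d+1)), k < (j:ℕ) → L.Es 0 * L.A ^ k * L.Es j = 0 := by
  intro k
  induction k with
  | zero =>
    intro j hj
    rw [pow_zero, mul_one]
    exact L.Es_orth (fun h => by simp [← h] at hj)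
  | succ k ih =>
    intro j hj
    have h1 : L.Es 0 * L.A ^ (k+1) * L.Es j = (L.Es 0 * L.A ^ k) * (L.A * L.Es j) := by
      rw [pow_succ]; simp only [Matrix.mul_assoc]
    rw [h1, L.middle_expand]
    refine Finset.sum_eq_zero fun i _ => ?_
    by_cases hik : k < (i:ℕ)
    · rw [ih i hik, zero_mul]
    · have hlt : (i:ℕ) + 1 < (j:ℕ) := by omega
      have h2 : L.Es i * (L.A * L.Es j) = 0 := by
        rw [← Matrix.mul_assoc]; exact L.EsAEs_zero i j (Or.inl hlt)
      rw [h2, mul_zero]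

lemma diag_left_ne : ∀ (n : ℕ) (h : n < d + 1), L.Es ⟨n, h⟩ * L.A ^ n * L.Es 0 ≠ 0 := by
  intro n
  induction n with
  | zero =>
    intro h
    have h0 : (⟨0, h⟩ : Fin (d+1)) = 0 := rfl
    rw [h0, pow_zero, mul_one, L.Es_idem]
    exact L.Es_ne 0
  | succ n ih =>
    intro h
    have hn : n < d + 1 := by omega
    set j : Fin (d+1) := ⟨n+1, h⟩ with hj_def
    set jn : Fin (d+1) := ⟨n, hn⟩ with hjn_def
    have h1 : L.Es j * L.A ^ (n+1) * L.Es 0 = (L.Es j * L.A) * (L.A ^ n * L.Es 0) := by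
      rw [pow_succ']; simp only [Matrix.mul_assoc]
    rw [h1, L.middle_expand]
    have hsingle : ∑ i, ((L.Es j * L.A) * L.Es i) * (L.Es i * (L.A ^ n * L.Es 0))
        = ((L.Es j * L.A) * L.Es jn) * (L.Es jn * (L.A ^ n * L.Es 0)) := by
      refine Finset.sum_eq_single jn (fun i _ hi => ?_) (fun hmem => absurd (Finset.mem_univ jn) hmem)
      have hvi : (i:ℕ) ≠ n := fun hv => hi (Fin.ext hv)
      by_cases hlt : (i:ℕ) + 1 < n + 1
      · rw [L.EsAEs_zero j i (Or.inr hlt), zero_mul]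
      · have hk : n < (i:ℕ) := by omega
        have h2 : L.Es i * (L.A ^ n * L.Es 0) = 0 := by
          rw [← Matrix.mul_assoc]; exact L.tri_left n i hk
        rw [h2, mul_zero]
    rw [hsingle]
    have hBe : (L.Es j * L.A) * L.Es jn ≠ 0 := L.EsAEs_ne j jn (Or.inr rfl)
    have heC : L.Es jn * (L.A ^ n * L.Es 0) ≠ 0 := by
      rw [← Matrix.mul_assoc]; exact ih hn
    have hkey : (L.Es j * L.A) * L.Es jn * (L.A ^ n * L.Es 0) ≠ 0 :=
      mul_mul_ne_zero (L.Es_idem jn) (L.Es_rank_le_one jn) hBe heC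
    have heq : ((L.Es j * L.A) * L.Es jn) * (L.Es jn * (L.A ^ n * L.Es 0))
        = (L.Es j * L.A) * L.Es jn * (L.A ^ n * L.Es 0) := by
      rw [← Matrix.mul_assoc, Matrix.mul_assoc (L.Es j * L.A) (L.Es jn) (L.Es jn), L.Es_idem]
    rw [heq]
    exact hkey

lemma diag_right_ne : ∀ (n : ℕ) (h : n < d + 1), L.Es 0 * L.A ^ n * L.Es ⟨n, h⟩ ≠ 0 := by
  intro n
  induction n with
  | zero =>
    intro h
    have h0 : (⟨0, h⟩ : Fin (d+1)) = 0 := rfl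
    rw [h0, pow_zero, mul_one, L.Es_idem]
    exact L.Es_ne 0
  | succ n ih =>
    intro h
    have hn : n < d + 1 := by omega
    set j : Fin (d+1) := ⟨n+1, h⟩ with hj_def
    set jn : Fin (d+1) := ⟨n, hn⟩ with hjn_def
    have h1 : L.Es 0 * L.A ^ (n+1) * L.Es j = (L.Es 0 * L.A ^ n) * (L.A * L.Es j) := by
      rw [pow_succ]; simp only [Matrix.mul_assoc]
    rw [h1, L.middle_expand]
    have hsingle : ∑ i, ((L.Es 0 * L.A ^ n) * L.Es i) * (L.Es i * (L.A * L.Es j))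
        = ((L.Es 0 * L.A ^ n) * L.Es jn) * (L.Es jn * (L.A * L.Es j)) := by
      refine Finset.sum_eq_single jn (fun i _ hi => ?_) (fun hmem => absurd (Finset.mem_univ jn) hmem)
      have hvi : (i:ℕ) ≠ n := fun hv => hi (Fin.ext hv)
      by_cases hik : n < (i:ℕ)
      · rw [L.tri_right n i hik, zero_mul]
      · have hlt : (i:ℕ) + 1 < n + 1 := by omega
        have h2 : L.Es i * (L.A * L.Es j) = 0 := by
          rw [← Matrix.mul_assoc]; exact L.EsAEs_zero i j (Or.inl hlt)
        rw [h2, mul_zero]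
    rw [hsingle]
    have hBe : (L.Es 0 * L.A ^ n) * L.Es jn ≠ 0 := ih hn
    have heC : L.Es jn * (L.A * L.Es j) ≠ 0 := by
      rw [← Matrix.mul_assoc]; exact L.EsAEs_ne jn j (Or.inl rfl)
    have hkey : (L.Es 0 * L.A ^ n) * L.Es jn * (L.A * L.Es j) ≠ 0 :=
      mul_mul_ne_zero (L.Es_idem jn) (L.Es_rank_le_one jn) hBe heC
    have heq : ((L.Es 0 * L.A ^ n) * L.Es jn) * (L.Es jn * (L.A * L.Es j))
        = (L.Es 0 * L.A ^ n) * L.Es jn * (L.A * L.Es j) := by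
      rw [← Matrix.mul_assoc, Matrix.mul_assoc (L.Es 0 * L.A ^ n) (L.Es jn) (L.Es jn), L.Es_idem]
    rw [heq]
    exact hkey

lemma E_eq_aeval (i : Fin (d+1)) :
    aeval L.A (Lagrange.basis Finset.univ L.θ i) = L.E i := by
  have hinj : Set.InjOn L.θ ↑(Finset.univ : Finset (Fin (d+1))) := L.θ_inj.injOn
  rw [L.aeval_eq]
  have hterm : ∀ j : Fin (d+1),
      (Lagrange.basis Finset.univ L.θ i).eval (L.θ j) • L.E j
        = if i = j then L.E i else 0 := by
    intro j
    by_cases h : i = j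
    · subst h
      rw [Lagrange.eval_basis_self hinj (Finset.mem_univ i), one_smul, if_pos rfl]
    · rw [Lagrange.eval_basis_of_ne h (Finset.mem_univ j), zero_smul, if_neg h]
  rw [Finset.sum_congr rfl (fun j _ => hterm j)]
  rw [Finset.sum_ite_eq Finset.univ i (fun _ => L.E i), if_pos (Finset.mem_univ i)]

lemma basis_natDegree (i : Fin (d+1)) :
    (Lagrange.basis Finset.univ L.θ i).natDegree = d := by
  have hinj : Set.InjOn L.θ ↑(Finset.univ : Finset (Fin (d+1))) := L.θ_inj.injOn
  rw [Lagrange.natDegree_basis hinj (Finset.mem_univ i), Finset.card_univ, Fintype.card_fin]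
  omega

lemma basis_coeff_ne (i : Fin (d+1)) :
    (Lagrange.basis Finset.univ L.θ i).coeff d ≠ 0 := by
  have hinj : Set.InjOn L.θ ↑(Finset.univ : Finset (Fin (d+1))) := L.θ_inj.injOn
  have h1 := L.basis_natDegree i
  have h2 := Polynomial.leadingCoeff_ne_zero.mpr (Lagrange.basis_ne_zero hinj (Finset.mem_univ i))
  rwa [Polynomial.leadingCoeff, h1] at h2

lemma E_mul_Es0_ne (i : Fin (d+1)) : L.E i * L.Es 0 ≠ 0 := by
  intro h0
  have hd : d < d + 1 := Nat.lt_succ_self d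
  set f := Lagrange.basis Finset.univ L.θ i with hf_def
  have hdeg : f.natDegree < d + 1 := by rw [L.basis_natDegree i]; exact hd
  have hrepr : L.E i * L.Es 0 = ∑ k ∈ Finset.range (d+1), f.coeff k • (L.A ^ k * L.Es 0) := by
    rw [← L.E_eq_aeval i, ← hf_def, Polynomial.aeval_eq_sum_range' hdeg, Finset.sum_mul]
    exact Finset.sum_congr rfl fun k _ => smul_mul_assoc _ _ _
  have hcalc : L.Es ⟨d, hd⟩ * (L.E i * L.Es 0)
      = f.coeff d • (L.Es ⟨d, hd⟩ * (L.A ^ d * L.Es 0)) := by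
    rw [hrepr, Finset.mul_sum]
    rw [Finset.sum_congr rfl (fun k _ => mul_smul_comm (f.coeff k) (L.Es ⟨d, hd⟩) _)]
    rw [Finset.sum_range_succ]
    have hz : ∀ k ∈ Finset.range d, f.coeff k • (L.Es ⟨d, hd⟩ * (L.A ^ k * L.Es 0)) = 0 := by
      intro k hk
      have hkd : k < d := Finset.mem_range.mp hk
      have : L.Es ⟨d, hd⟩ * (L.A ^ k * L.Es 0) = 0 := by
        rw [← Matrix.mul_assoc]; exact L.tri_left k ⟨d, hd⟩ hkd
      rw [this, smul_zero]
    rw [Finset.sum_eq_zero hz, zero_add]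
  rw [h0, mul_zero] at hcalc
  have hne : L.Es ⟨d, hd⟩ * (L.A ^ d * L.Es 0) ≠ 0 := by
    rw [← Matrix.mul_assoc]; exact L.diag_left_ne d hd
  exact hne (by
    rcases smul_eq_zero.mp hcalc.symm with h | h
    · exact absurd h (L.basis_coeff_ne i)
    · exact h)

lemma Es0_mul_E_ne (j : Fin (d+1)) : L.Es 0 * L.E j ≠ 0 := by
  intro h0
  have hd : d < d + 1 := Nat.lt_succ_self d
  set f := Lagrange.basis Finset.univ L.θ j with hf_def
  have hdeg : f.natDegree < d + 1 := by rw [L.basis_natDegree j]; exact hd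
  have hrepr : L.Es 0 * L.E j = ∑ k ∈ Finset.range (d+1), f.coeff k • (L.Es 0 * L.A ^ k) := by
    rw [← L.E_eq_aeval j, ← hf_def, Polynomial.aeval_eq_sum_range' hdeg, Finset.mul_sum]
    exact Finset.sum_congr rfl fun k _ => mul_smul_comm _ _ _
  have hcalc : (L.Es 0 * L.E j) * L.Es ⟨d, hd⟩
      = f.coeff d • (L.Es 0 * L.A ^ d * L.Es ⟨d, hd⟩) := by
    rw [hrepr, Finset.sum_mul]
    rw [Finset.sum_congr rfl (fun k _ => smul_mul_assoc (f.coeff k) _ (L.Es ⟨d, hd⟩))]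
    rw [Finset.sum_range_succ]
    have hz : ∀ k ∈ Finset.range d, f.coeff k • (L.Es 0 * L.A ^ k * L.Es ⟨d, hd⟩) = 0 := by
      intro k hk
      have hkd : k < d := Finset.mem_range.mp hk
      rw [L.tri_right k ⟨d, hd⟩ hkd, smul_zero]
    rw [Finset.sum_eq_zero hz, zero_add]
  rw [h0, zero_mul] at hcalc
  have hne : L.Es 0 * L.A ^ d * L.Es ⟨d, hd⟩ ≠ 0 := L.diag_right_ne d hd
  exact hne (by
    rcases smul_eq_zero.mp hcalc.symm with h | h
    · exact absurd h (L.basis_coeff_ne j)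
    · exact h)

lemma E_Es_E_ne (i j : Fin (d+1)) : L.E i * L.Es 0 * L.E j ≠ 0 :=
  mul_mul_ne_zero (L.Es_idem 0) (L.Es_rank_le_one 0) (L.E_mul_Es0_ne i) (L.Es0_mul_E_ne j)

end LeonardSystem

theorem stmt5 {K : Type*} [Field K] {d : ℕ} (L : LeonardSystem K d)
    (X Y : Matrix (Fin (d+1)) (Fin (d+1)) K)
    (hX : X ∈ Algebra.adjoin K ({L.A} : Set (Matrix (Fin (d+1)) (Fin (d+1)) K)))
    (hY : Y ∈ Algebra.adjoin K ({L.A} : Set (Matrix (Fin (d+1)) (Fin (d+1)) K)))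
    (h : X * L.Es 0 * Y = 0) :
    X = 0 ∨ Y = 0 := by
  rw [Algebra.adjoin_singleton_eq_range_aeval] at hX hY
  obtain ⟨p, hp⟩ := hX
  obtain ⟨q, hq⟩ := hY
  by_contra hc
  push_neg at hc
  obtain ⟨hX0, hY0⟩ := hc
  have hXe : X = ∑ j, p.eval (L.θ j) • L.E j := by rw [← L.aeval_eq]; exact hp.symm
  have hYe : Y = ∑ j, q.eval (L.θ j) • L.E j := by rw [← L.aeval_eq]; exact hq.symm
  have hpi : ∃ i, p.eval (L.θ i) ≠ 0 := by
    by_contra h'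
    push_neg at h'
    exact hX0 (by rw [hXe]; simp [h'])
  have hqj : ∃ j, q.eval (L.θ j) ≠ 0 := by
    by_contra h'
    push_neg at h'
    exact hY0 (by rw [hYe]; simp [h'])
  obtain ⟨i, hi⟩ := hpi
  obtain ⟨j, hj⟩ := hqj
  have h1 : L.E i * X = p.eval (L.θ i) • L.E i := by
    rw [hXe, Finset.mul_sum]
    rw [Finset.sum_congr rfl (fun k _ => by
      rw [mul_smul_comm, L.E_mul] :
      ∀ k ∈ Finset.univ, L.E i * (p.eval (L.θ k) • L.E k)
        = p.eval (L.θ k) • (if i = k then L.E i else 0))]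
    simp only [smul_ite, smul_zero]
    rw [Finset.sum_ite_eq Finset.univ i (fun k => p.eval (L.θ k) • L.E i), if_pos (Finset.mem_univ i)]
  have h2 : Y * L.E j = q.eval (L.θ j) • L.E j := by
    rw [hYe, Finset.sum_mul]
    rw [Finset.sum_congr rfl (fun k _ => by
      rw [smul_mul_assoc, L.E_mul] :
      ∀ k ∈ Finset.univ, (q.eval (L.θ k) • L.E k) * L.E j
        = q.eval (L.θ k) • (if k = j then L.E k else 0))]
    simp only [smul_ite, smul_zero]
    rw [Finset.sum_ite_eq' Finset.univ j (fun k => q.eval (L.θ k) • L.E k), if_pos (Finset.mem_univ j)]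
  have hmain : L.E i * (X * L.Es 0 * Y) * L.E j
      = (p.eval (L.θ i) * q.eval (L.θ j)) • (L.E i * L.Es 0 * L.E j) := by
    calc L.E i * (X * L.Es 0 * Y) * L.E j
        = (L.E i * X) * L.Es 0 * (Y * L.E j) := by
          simp only [Matrix.mul_assoc]
      _ = (p.eval (L.θ i) • L.E i) * L.Es 0 * (q.eval (L.θ j) • L.E j) := by rw [h1, h2]
      _ = (p.eval (L.θ i) * q.eval (L.θ j)) • (L.E i * L.Es 0 * L.E j) := by
          rw [smul_mul_assoc, smul_mul_assoc, mul_smul_comm, smul_smul]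
  rw [h, mul_zero, zero_mul] at hmain
  rcases smul_eq_zero.mp hmain.symm with h' | h'
  · rcases mul_eq_zero.mp h' with h'' | h''
    · exact hi h''
    · exact hj h''
  · exact L.E_Es_E_ne i j h'
end

section
/- Let Φ = (A; A*; {E_i}; {E*_i}) be a Leonard system in 𝒜 ≅ Mat_{d+1}(K). Then for all 0 ≤ i, j ≤ d: (i) E*_i A^r E*_j = 0 whenever 0 ≤ r < |i−j|; (ii) if i ≤ j then E*_i A^{j−i} E*_j = E*_i A E*_{i+1} A ⋯ E*_{j−1} A E*_j and this element is nonzero; (iii) with r = |i−j|, the element E*_i A^r E*_j is a basis for the one-dimensional K-vector space E*_i 𝒜 E*_j. -/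
/-
Over a field, `d + 1` nonzero orthogonal idempotents in `Mat_{d+1}(K)` all have rank one, so each
`E*_k` is a product `u vᵀ`. Hence `X E*_k Y ≠ 0` as soon as `X E*_k ≠ 0` and `E*_k Y ≠ 0`, and
`E*_i 𝒜 E*_j` is spanned by `u_i v_jᵀ`. Inserting `1 = ∑ E*_k` gives
`E*_i A^(r+1) E*_j = ∑_k (E*_i A^r E*_k)(E*_k A E*_j)`, and since `E*_k A E*_j` vanishes unless
`|k - j| ≤ 1`, induction on `r` shows that `E*_i A^r E*_j` vanishes for `r < |i - j|`, while for
`r = |i - j|` only the neighbour `k` of `j` on the side of `i` survives, which gives both the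
product formula and, through the rank-one factorisation, nonvanishing.
-/

open Matrix Polynomial

namespace Matrix

variable {ι m K : Type*} [Fintype ι] [Fintype m] [Field K]

theorem OrthogonalIdempotents.exists_eq_vecMulVec [DecidableEq m] {e : ι → Matrix m m K}
    (he : OrthogonalIdempotents e) (hne : ∀ i, e i ≠ 0) (hcard : Fintype.card ι = Fintype.card m)
    (k : ι) : ∃ u v : m → K, e k = vecMulVec u v := by
  classical
  have hcol : ∀ l, ∃ x : m → K, e l *ᵥ x ≠ 0 := fun l => by
    by_contra! h
    exact hne l (ext_of_mulVec_single fun c => by rw [h, zero_mulVec])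
  choose x hx using hcol
  set u : ι → m → K := fun l => e l *ᵥ x l
  have he_u : ∀ k l, e k *ᵥ u l = if k = l then u l else 0 := fun k l => by
    rw [mulVec_mulVec, he.mul_eq]
    split_ifs with h
    · rw [h]
    · exact zero_mulVec _
  -- applying `e k` to a linear relation among the `u l` isolates its `k`-th coefficient
  have hind : LinearIndependent K u := Fintype.linearIndependent_iff.mpr fun g hg k => by
    have := congrArg (e k *ᵥ ·) hg
    simp only [mulVec_sum, mulVec_smul, he_u, smul_ite, smul_zero, Finset.sum_ite_eq,
      Finset.mem_univ, if_true, mulVec_zero] at this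
    exact (smul_eq_zero.mp this).resolve_right (hx k)
  let b := basisOfLinearIndependentOfCardEqFinrank' u hind (by simpa using hcard)
  have he_mulVec : ∀ y, e k *ᵥ y = b.repr y k • u k := fun y => by
    conv_lhs => rw [← b.sum_repr y]
    simp [b, mulVec_sum, mulVec_smul, he_u]
  refine ⟨u k, fun c => b.repr (Pi.single c 1) k, ext fun a c => ?_⟩
  simpa [vecMulVec_apply, mul_comm] using congrFun (he_mulVec (Pi.single c 1)) a

theorem mul_mul_ne_zero_of_eq_vecMulVec {E : Matrix m m K} (hE : ∃ u v, E = vecMulVec u v)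
    {X Y : Matrix m m K} (hX : X * E ≠ 0) (hY : E * Y ≠ 0) : X * E * Y ≠ 0 := by
  obtain ⟨u, v, rfl⟩ := hE
  simp only [mul_vecMulVec, vecMulVec_mul, ne_eq, vecMulVec_eq_zero, not_or] at *
  exact ⟨hX.1, hY.2⟩

theorem exists_mul_mul_eq_smul_of_eq_vecMulVec {E F : Matrix m m K}
    (hE : ∃ u v, E = vecMulVec u v) (hF : ∃ u v, F = vecMulVec u v)
    {Y : Matrix m m K} (hY : E * Y * F ≠ 0) (X : Matrix m m K) :
    ∃ c : K, E * X * F = c • (E * Y * F) := by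
  obtain ⟨u, v, rfl⟩ := hE
  obtain ⟨w, x, rfl⟩ := hF
  have hform : ∀ Z : Matrix m m K, vecMulVec u v * Z * vecMulVec w x
      = ((v ᵥ* Z) ⬝ᵥ w) • vecMulVec u x := fun Z => by
    rw [vecMulVec_mul, vecMulVec_mul_vecMulVec, vecMulVec_smul]
  rw [hform] at hY
  refine ⟨((v ᵥ* X) ⬝ᵥ w) / ((v ᵥ* Y) ⬝ᵥ w), ?_⟩
  rw [hform, hform, smul_smul, div_mul_cancel₀ _ (left_ne_zero_of_smul hY)]

end Matrix

theorem natIdx_val {d : ℕ} {M : Type*} [Zero M] (E : Fin (d+1) → M) (k : Fin (d+1)) :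
    natIdx E k = E k :=
  dif_pos k.isLt

theorem Fin.exists_natAbs_sub_eq_of_natAbs_sub_eq_succ {n r : ℕ} {i j : Fin n}
    (hij : (((i:ℕ):ℤ) - ((j:ℕ):ℤ)).natAbs = r + 1) :
    ∃ k : Fin n, (((i:ℕ):ℤ) - ((k:ℕ):ℤ)).natAbs = r ∧
      (((k:ℕ):ℤ) - ((j:ℕ):ℤ)).natAbs = 1 := by
  by_cases h : (i:ℕ) < j
  · exact ⟨⟨(j:ℕ) - 1, by omega⟩, by dsimp only; omega, by dsimp only; omega⟩
  · exact ⟨⟨(j:ℕ) + 1, by omega⟩, by dsimp only; omega, by dsimp only; omega⟩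

namespace LeonardSystem

variable {K : Type*} [Field K] {d : ℕ} (L : LeonardSystem K d)

theorem orthogonalIdempotents_Es : OrthogonalIdempotents L.Es where
  idem i := by rw [IsIdempotentElem, L.Es_mul, if_pos rfl]
  ortho i j hij := by simpa [hij] using L.Es_mul i j

theorem Es_eq_vecMulVec (k : Fin (d+1)) : ∃ u v, L.Es k = vecMulVec u v :=
  L.orthogonalIdempotents_Es.exists_eq_vecMulVec L.Es_ne (by simp) k

theorem Es_mul_Es_self (k : Fin (d+1)) : L.Es k * L.Es k = L.Es k :=
  (L.orthogonalIdempotents_Es.idem k).eq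

theorem Es_mul_pow_succ_mul_Es (r : ℕ) (i j : Fin (d+1)) :
    L.Es i * L.A ^ (r+1) * L.Es j
      = ∑ k, (L.Es i * L.A ^ r * L.Es k) * (L.Es k * L.A * L.Es j) := by
  have hmid : L.Es i * L.A ^ (r+1) * L.Es j
      = L.Es i * L.A ^ r * (∑ k, L.Es k) * L.A * L.Es j := by
    rw [L.Es_sum, mul_one, pow_succ]
    simp only [mul_assoc]
  rw [hmid, Finset.mul_sum, Finset.sum_mul, Finset.sum_mul]
  refine Finset.sum_congr rfl fun k _ => ?_
  conv_lhs => rw [← L.Es_mul_Es_self k]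
  noncomm_ring

theorem Es_mul_pow_mul_Es_eq_zero {r : ℕ} {i j : Fin (d+1)}
    (hr : r < (((i:ℕ):ℤ) - ((j:ℕ):ℤ)).natAbs) : L.Es i * L.A ^ r * L.Es j = 0 := by
  induction r generalizing j with
  | zero =>
    have hij : i ≠ j := by rintro rfl; simp at hr
    simpa [hij] using L.Es_mul i j
  | succ r ih =>
    rw [Es_mul_pow_succ_mul_Es]
    refine Finset.sum_eq_zero fun k _ => ?_
    by_cases hkj : (k:ℕ) + 1 < j ∨ (j:ℕ) + 1 < k
    · rw [L.EsAEs_zero k j hkj, mul_zero]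
    · rw [ih (by omega), zero_mul]

theorem Es_mul_pow_succ_mul_Es_eq_mul {r : ℕ} {i j k : Fin (d+1)}
    (hij : (((i:ℕ):ℤ) - ((j:ℕ):ℤ)).natAbs = r + 1) (hik : (((i:ℕ):ℤ) - ((k:ℕ):ℤ)).natAbs = r)
    (hkj : (((k:ℕ):ℤ) - ((j:ℕ):ℤ)).natAbs = 1) :
    L.Es i * L.A ^ (r+1) * L.Es j = L.Es i * L.A ^ r * L.Es k * L.A * L.Es j := by
  rw [Es_mul_pow_succ_mul_Es, Finset.sum_eq_single k]
  · conv_rhs => rw [← L.Es_mul_Es_self k]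
    noncomm_ring
  · intro l _ hlk
    by_cases hlj : (l:ℕ) + 1 < j ∨ (j:ℕ) + 1 < l
    · rw [L.EsAEs_zero l j hlj, mul_zero]
    · have : (l:ℕ) ≠ k := fun h => hlk (Fin.ext h)
      rw [L.Es_mul_pow_mul_Es_eq_zero (by omega), zero_mul]
  · simp

theorem Es_mul_pow_natAbs_mul_Es_ne_zero (i j : Fin (d+1)) :
    L.Es i * L.A ^ (((i:ℕ):ℤ) - ((j:ℕ):ℤ)).natAbs * L.Es j ≠ 0 := by
  generalize hr : (((i:ℕ):ℤ) - ((j:ℕ):ℤ)).natAbs = r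
  induction r generalizing j with
  | zero =>
    have hij : i = j := Fin.ext (by omega)
    simpa [hij, L.Es_mul_Es_self] using L.Es_ne j
  | succ r ih =>
    obtain ⟨k, hik, hkj⟩ := Fin.exists_natAbs_sub_eq_of_natAbs_sub_eq_succ hr
    rw [L.Es_mul_pow_succ_mul_Es_eq_mul hr hik hkj, mul_assoc _ L.A]
    refine mul_mul_ne_zero_of_eq_vecMulVec (L.Es_eq_vecMulVec k) (ih k hik) ?_
    rw [← mul_assoc]
    exact L.EsAEs_ne k j (by omega)

theorem Es_mul_pow_sub_mul_Es_eq_prod {i j : Fin (d+1)} (hij : (i:ℕ) ≤ j) :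
    L.Es i * L.A ^ ((j:ℕ) - (i:ℕ)) * L.Es j =
      (((List.range ((j:ℕ) - (i:ℕ))).map (fun t => natIdx L.Es ((i:ℕ) + t) * L.A)).prod) *
        L.Es j := by
  obtain ⟨g, hg⟩ := Nat.exists_eq_add_of_le hij
  induction g generalizing j with
  | zero =>
    have : i = j := Fin.ext (by omega)
    subst this
    simp [L.Es_mul_Es_self]
  | succ g ih =>
    obtain ⟨k, hk⟩ : ∃ k : Fin (d+1), (k:ℕ) = i + g := ⟨⟨i + g, by omega⟩, rfl⟩
    have hprod := ih (j := k) (by omega) hk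
    rw [show (k:ℕ) - i = g by omega] at hprod
    rw [show (j:ℕ) - i = g + 1 by omega, List.range_succ, List.map_append, List.prod_append,
      List.map_singleton, List.prod_singleton, ← hk, natIdx_val,
      L.Es_mul_pow_succ_mul_Es_eq_mul (k := k) (by omega) (by omega) (by omega), hprod]
    simp only [mul_assoc]

end LeonardSystem

theorem stmt6 {K : Type*} [Field K] {d : ℕ} (L : LeonardSystem K d) :
    (∀ i j : Fin (d+1), ∀ r : ℕ, (r : ℤ) < |((i:ℕ):ℤ) - ((j:ℕ):ℤ)| →
      L.Es i * L.A ^ r * L.Es j = 0) ∧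
    (∀ i j : Fin (d+1), (i:ℕ) ≤ (j:ℕ) →
      L.Es i * L.A ^ ((j:ℕ) - (i:ℕ)) * L.Es j =
        (((List.range ((j:ℕ) - (i:ℕ))).map
          (fun t => natIdx L.Es ((i:ℕ) + t) * L.A)).prod) * L.Es j ∧
      L.Es i * L.A ^ ((j:ℕ) - (i:ℕ)) * L.Es j ≠ 0) ∧
    (∀ i j : Fin (d+1),
      L.Es i * L.A ^ (((i:ℕ):ℤ) - ((j:ℕ):ℤ)).natAbs * L.Es j ≠ 0 ∧
      ∀ X : Matrix (Fin (d+1)) (Fin (d+1)) K, ∃ c : K,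
        L.Es i * X * L.Es j = c • (L.Es i * L.A ^ (((i:ℕ):ℤ) - ((j:ℕ):ℤ)).natAbs * L.Es j)) := by
  refine ⟨fun i j r hr => L.Es_mul_pow_mul_Es_eq_zero ?_, fun i j hij => ⟨?_, ?_⟩,
    fun i j => ⟨L.Es_mul_pow_natAbs_mul_Es_ne_zero i j, ?_⟩⟩
  · rw [Int.abs_eq_natAbs] at hr
    omega
  · exact L.Es_mul_pow_sub_mul_Es_eq_prod hij
  · have h := L.Es_mul_pow_natAbs_mul_Es_ne_zero i j
    rwa [show (((i:ℕ):ℤ) - ((j:ℕ):ℤ)).natAbs = (j:ℕ) - i by omega] at h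
  · exact exists_mul_mul_eq_smul_of_eq_vecMulVec (L.Es_eq_vecMulVec i) (L.Es_eq_vecMulVec j)
      (L.Es_mul_pow_natAbs_mul_Es_ne_zero i j)
end

section
/- Let A, A* be a Leonard pair in 𝒜 ≅ Mat_{d+1}(K). Then there exists a unique antiautomorphism † of 𝒜 such that A† = A and A*† = A*. Moreover †∘† is the identity map on 𝒜. -/
open Matrix Polynomial

/-!
Work in a basis where `A` is irreducible tridiagonal (`B`) and `A*` is diagonal (`L`). The
diagonal entries of `L` are distinct: in the other basis `A*` is irreducible tridiagonal, and an
eigenvector of such a matrix is determined by its first coordinate. So polynomials in `L` give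
the diagonal matrix units `Eᵢ`, the products `Eᵢ B Eⱼ` give the units along the path `i ~ i ± 1`,
and `A`, `A*` generate `𝒜`. If `f`, `g` are antiautomorphisms fixing `A` and `A*`, then `f ∘ g`
is an automorphism fixing a generating set, hence the identity; this gives both uniqueness and
`† ∘ † = 1`. For existence, the nonzero off-diagonal entries of `B` yield an invertible diagonal
`D` with `D Bᵀ = B D`, and `X ↦ Q Xᵀ Q⁻¹` fixes `A` and `A*`, where `Q = S D Sᵀ` for the
change of basis `S`.
-/

section

variable {K : Type*} [Field K]

namespace IsIrredTridiag

variable {n : ℕ} {B : Matrix (Fin (n+1)) (Fin (n+1)) K}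

theorem eq_zero_of_mulVec_eq_smul (hB : IsIrredTridiag B) {c : K} {v : Fin (n+1) → K}
    (hv : B *ᵥ v = c • v) (h0 : v 0 = 0) : v = 0 := by
  suffices h : ∀ i : Fin (n+1), ∀ j ≤ i, v j = 0 from funext fun j => h j j le_rfl
  refine Fin.induction (fun j hj => by rwa [Fin.le_zero_iff.mp hj]) (fun i ih j hj => ?_)
  by_cases hji : j ≤ i.castSucc
  · exact ih j hji
  obtain rfl : j = i.succ := le_antisymm hj (Fin.castSucc_lt_iff_succ_le.mp (not_le.mp hji))
  have hrow : (B *ᵥ v) i.castSucc = B i.castSucc i.succ * v i.succ := by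
    refine Finset.sum_eq_single i.succ (fun k _ hk => ?_) fun h => (h (Finset.mem_univ _)).elim
    by_cases hki : k ≤ i.castSucc
    · rw [ih k hki, mul_zero]
    · refine mul_eq_zero_of_left (hB.1 _ _ (Or.inl ?_)) _
      simp only [Fin.le_def, Ne, Fin.ext_iff, Fin.val_succ, Fin.val_castSucc] at hk hki ⊢
      omega
  have hprod : B i.castSucc i.succ * v i.succ = 0 := by
    rw [← hrow, hv, Pi.smul_apply, ih _ le_rfl, smul_zero]
  exact (mul_eq_zero.mp hprod).resolve_left (hB.2 _ _ (Or.inl (by simp)))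

theorem smul_sub_smul_eq_zero (hB : IsIrredTridiag B) {c : K} {v w : Fin (n+1) → K}
    (hv : B *ᵥ v = c • v) (hw : B *ᵥ w = c • w) : w 0 • v - v 0 • w = 0 :=
  hB.eq_zero_of_mulVec_eq_smul (c := c)
    (by rw [mulVec_sub, mulVec_smul, mulVec_smul, hv, hw, smul_comm (w 0), smul_comm (v 0),
      smul_sub])
    (by simp [mul_comm])

theorem injective_of_mul_eq_mul_diagonal (hB : IsIrredTridiag B)
    {N : Matrix (Fin (n+1)) (Fin (n+1)) K} (hN : IsUnit N) {δ : Fin (n+1) → K}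
    (h : B * N = N * diagonal δ) : Function.Injective δ := by
  have hcol (k : Fin (n+1)) : B *ᵥ (N *ᵥ Pi.single k 1) = δ k • N *ᵥ Pi.single k 1 := by
    rw [mulVec_mulVec, h, ← mulVec_mulVec, diagonal_mulVec_single, ← mulVec_smul, ← Pi.single_smul,
      smul_eq_mul]
  have hNinj : Function.Injective N.mulVec := mulVec_injective_iff_isUnit.mpr hN
  intro i j hij
  by_contra hne
  set v := N *ᵥ Pi.single i 1
  set w := N *ᵥ Pi.single j 1
  have hdep : w 0 • Pi.single i (1 : K) - v 0 • Pi.single j 1 = 0 := hNinj <| by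
    rw [mulVec_sub, mulVec_smul, mulVec_smul, mulVec_zero]
    exact hB.smul_sub_smul_eq_zero (hcol i) (hij ▸ hcol j)
  have hw0 : w 0 = 0 := by simpa [hne] using congrFun hdep i
  have hsingle : Pi.single j (1 : K) = 0 := hNinj <| by
    rw [mulVec_zero]; exact hB.eq_zero_of_mulVec_eq_smul (hcol j) hw0
  simpa using congrFun hsingle j

theorem exists_diagonal_mul_transpose_eq (hB : IsIrredTridiag B) :
    ∃ δ : Fin (n+1) → K, (∀ i, δ i ≠ 0) ∧ diagonal δ * Bᵀ = B * diagonal δ := by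
  let δ : Fin (n+1) → K :=
    Fin.induction 1 fun i x => x * B i.succ i.castSucc / B i.castSucc i.succ
  have hsucc (i : Fin n) : δ i.succ = δ i.castSucc * B i.succ i.castSucc / B i.castSucc i.succ :=
    Fin.induction_succ ..
  have hne : ∀ i, δ i ≠ 0 := Fin.induction (by simp [δ]) fun i ih => by
    rw [hsucc]
    exact div_ne_zero (mul_ne_zero ih (hB.2 _ _ (Or.inr (by simp)))) (hB.2 _ _ (Or.inl (by simp)))
  have hadj (i : Fin n) : δ i.castSucc * B i.succ i.castSucc = B i.castSucc i.succ * δ i.succ := by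
    rw [hsucc, mul_div_assoc', mul_div_cancel_left₀ _ (hB.2 _ _ (Or.inl (by simp)))]
  refine ⟨δ, hne, ?_⟩
  ext i j
  rw [diagonal_mul, mul_diagonal, transpose_apply]
  have hpair (i j : Fin (n+1)) (h : (i:ℕ) + 1 = j) : ∃ k : Fin n, k.castSucc = i ∧ k.succ = j :=
    ⟨⟨i, by omega⟩, rfl, Fin.ext h⟩
  by_cases hij : (i:ℕ) + 1 = j
  · obtain ⟨k, rfl, rfl⟩ := hpair i j hij
    exact hadj k
  by_cases hji : (j:ℕ) + 1 = i
  · obtain ⟨k, rfl, rfl⟩ := hpair j i hji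
    rw [mul_comm, ← hadj k, mul_comm]
  obtain rfl | hne := eq_or_ne i j
  · exact mul_comm _ _
  rw [hB.1 i j (by omega), hB.1 j i (by omega), mul_zero, zero_mul]

end IsIrredTridiag

section Generation

variable {ι : Type*} [Fintype ι] [DecidableEq ι]

theorem single_mem_adjoin_diagonal {δ : ι → K} (hδ : Function.Injective δ) (i : ι) :
    single i i (1 : K) ∈ Algebra.adjoin K {diagonal δ} := by
  let p : K[X] := ∏ k ∈ Finset.univ.erase i, (X - C (δ k))
  have hp : (fun m => p.eval (δ m)) = Pi.single i (p.eval (δ i)) := by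
    funext m
    obtain rfl | hm := eq_or_ne m i
    · simp
    · simp only [Pi.single_apply, hm, if_false, p, eval_prod]
      exact Finset.prod_eq_zero (Finset.mem_erase.mpr ⟨hm, Finset.mem_univ m⟩) (by simp)
  have hc : p.eval (δ i) ≠ 0 := by
    simp [p, eval_prod, Finset.prod_eq_zero_iff, sub_eq_zero, hδ.eq_iff]
  have haeval : aeval (diagonal δ) p = p.eval (δ i) • single i i 1 := by
    rw [← diagonalAlgHom_apply K, aeval_algHom_apply, aeval_pi_apply]
    simp_rw [coe_aeval_eq_eval]
    rw [hp, diagonalAlgHom_apply, diagonal_single, smul_single, smul_eq_mul, mul_one]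
  rw [← inv_smul_smul₀ hc (single i i (1 : K)), ← haeval]
  exact Subalgebra.smul_mem _ (aeval_mem_adjoin_singleton K _) _

theorem Subalgebra.eq_top_of_single_mem {T : Subalgebra K (Matrix ι ι K)}
    (h : ∀ i j, single i j (1 : K) ∈ T) : T = ⊤ := by
  refine eq_top_iff.mpr fun X _ => ?_
  rw [matrix_eq_sum_single X]
  refine sum_mem fun i _ => sum_mem fun j _ => ?_
  rw [show single i j (X i j) = X i j • single i j 1 by rw [smul_single, smul_eq_mul, mul_one]]
  exact T.smul_mem (h i j) _

theorem adjoin_pair_conj_eq_top {P A A' : Matrix ι ι K} (hP : IsUnit P)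
    (h : Algebra.adjoin K {P⁻¹ * A * P, P⁻¹ * A' * P} = ⊤) : Algebra.adjoin K {A, A'} = ⊤ := by
  obtain ⟨u, rfl⟩ := hP
  let φ := MulSemiringAction.toAlgEquiv K (Matrix ι ι K) (ConjAct.toConjAct u)
  have hφ (X : Matrix ι ι K) : φ ((u : Matrix ι ι K)⁻¹ * X * u) = X := by
    simp [φ, ConjAct.units_smul_def, ← coe_units_inv, mul_assoc]
  have := congrArg (Subalgebra.map φ.toAlgHom) h
  rw [AlgHom.map_adjoin, Set.image_pair] at this
  rwa [AlgEquiv.coe_toAlgHom, hφ, hφ, Algebra.map_top, (AlgHom.range_eq_top _).mpr φ.surjective]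
    at this

end Generation

section PathGraph

variable {n : ℕ}

theorem Subalgebra.single_mem_of_pathGraph_adj {T : Subalgebra K (Matrix (Fin (n+1)) (Fin (n+1)) K)}
    (hdiag : ∀ i, single i i (1 : K) ∈ T)
    (hadj : ∀ i j, (SimpleGraph.pathGraph (n+1)).Adj i j → single i j (1 : K) ∈ T)
    (i j : Fin (n+1)) :
    single i j (1 : K) ∈ T := by
  induction (SimpleGraph.reachable_iff_reflTransGen i j).mp
    ((SimpleGraph.pathGraph_connected n).preconnected i j) with
  | refl => exact hdiag i
  | tail _ hadj' ih => simpa using mul_mem ih (hadj _ _ hadj')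

theorem IsIrredTridiag.adjoin_diagonal_eq_top {B : Matrix (Fin (n+1)) (Fin (n+1)) K}
    (hB : IsIrredTridiag B) {δ : Fin (n+1) → K} (hδ : Function.Injective δ) :
    Algebra.adjoin K {B, diagonal δ} = ⊤ := by
  set T := Algebra.adjoin K {B, diagonal δ}
  have hdiag (i : Fin (n+1)) : single i i (1 : K) ∈ T :=
    Algebra.adjoin_mono (Set.subset_insert _ _) (single_mem_adjoin_diagonal hδ i)
  refine Subalgebra.eq_top_of_single_mem
    (Subalgebra.single_mem_of_pathGraph_adj hdiag fun i j hij => ?_)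
  have hBij : B i j ≠ 0 := hB.2 i j (SimpleGraph.pathGraph_adj.mp hij)
  have hunit : single i j (1 : K) = (B i j)⁻¹ • (single i i 1 * B * single j j 1) := by
    rw [single_mul_mul_single, one_mul, mul_one, smul_single, smul_eq_mul, inv_mul_cancel₀ hBij]
  rw [hunit]
  exact T.smul_mem (mul_mem (mul_mem (hdiag i) (Algebra.subset_adjoin (by simp))) (hdiag j)) _

end PathGraph

section Antiautomorphism

variable {R A : Type*} [CommSemiring R] [Semiring A] [Algebra R A]

theorem LinearEquiv.map_one_of_map_mul_rev (f : A ≃ₗ[R] A) (hf : ∀ x y, f (x * y) = f y * f x) :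
    f 1 = 1 :=
  calc f 1 = f (f.symm 1) * f 1 := by rw [f.apply_symm_apply, one_mul]
    _ = 1 := by rw [← hf, one_mul, f.apply_symm_apply]

theorem LinearEquiv.apply_apply_eq_self_of_adjoin_eq_top {s : Set A}
    (hs : Algebra.adjoin R s = ⊤) {f g : A ≃ₗ[R] A}
    (hf : ∀ x y, f (x * y) = f y * f x) (hg : ∀ x y, g (x * y) = g y * g x)
    (hfs : ∀ x ∈ s, f x = x) (hgs : ∀ x ∈ s, g x = x) (x : A) : f (g x) = x := by
  let φ : A →ₐ[R] A := AlgHom.ofLinearMap (f.toLinearMap ∘ₗ g.toLinearMap)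
    (by simp [g.map_one_of_map_mul_rev hg, f.map_one_of_map_mul_rev hf])
    (fun x y => by simp [hf, hg])
  have hφ : φ = AlgHom.id R A :=
    AlgHom.ext_of_adjoin_eq_top hs fun x hx => by simp [φ, hgs x hx, hfs x hx]
  exact DFunLike.congr_fun hφ x

end Antiautomorphism

section TransposeConj

variable {ι : Type*} [Fintype ι] [DecidableEq ι]

theorem exists_antiautomorphism_fixing_of_isUnit {Q : Matrix ι ι K} (hQ : IsUnit Q) :
    ∃ f : Matrix ι ι K ≃ₗ[K] Matrix ι ι K,
      (∀ X Y, f (X * Y) = f Y * f X) ∧ ∀ Z, Q * Zᵀ = Z * Q → f Z = Z := by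
  have hQd := (isUnit_iff_isUnit_det Q).mp hQ
  let φ : Matrix ι ι K →ₗ[K] Matrix ι ι K :=
    { toFun X := Q * Xᵀ * Q⁻¹
      map_add' X Y := by simp only [transpose_add, Matrix.mul_add, Matrix.add_mul]
      map_smul' c X := by
        simp only [transpose_smul, mul_smul_comm, smul_mul_assoc, RingHom.id_apply] }
  have hinj : Function.Injective φ := fun X Y h =>
    transpose_injective (hQ.mul_left_cancel ((isUnit_nonsing_inv_iff.mpr hQ).mul_right_cancel h))
  refine ⟨LinearEquiv.ofInjectiveEndo φ hinj, fun X Y => ?_, fun Z hZ => ?_⟩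
  · show Q * (X * Y)ᵀ * Q⁻¹ = Q * Yᵀ * Q⁻¹ * (Q * Xᵀ * Q⁻¹)
    simp only [transpose_mul, Matrix.mul_assoc, nonsing_inv_mul_cancel_left _ _ hQd]
  · show Q * Zᵀ * Q⁻¹ = Z
    rw [hZ, mul_nonsing_inv_cancel_right _ _ hQd]

theorem mul_transpose_comm_of_conj {P D Z : Matrix ι ι K} (hP : IsUnit P)
    (h : D * (P⁻¹ * Z * P)ᵀ = P⁻¹ * Z * P * D) : P * D * Pᵀ * Zᵀ = Z * (P * D * Pᵀ) := by
  have hZ : Z * P = P * (P⁻¹ * Z * P) := by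
    rw [Matrix.mul_assoc, mul_nonsing_inv_cancel_left _ _ ((isUnit_iff_isUnit_det P).mp hP)]
  calc P * D * Pᵀ * Zᵀ = P * (D * (P⁻¹ * Z * P)ᵀ) * Pᵀ := by
        rw [Matrix.mul_assoc (P * D), ← transpose_mul, hZ, transpose_mul]
        simp only [Matrix.mul_assoc]
    _ = Z * (P * D * Pᵀ) := by rw [h, ← Matrix.mul_assoc P, ← hZ]; simp only [Matrix.mul_assoc]

end TransposeConj

namespace LeonardPair

variable {d : ℕ} (P : LeonardPair K d)

theorem adjoin_eq_top : Algebra.adjoin K {P.A, P.As} = ⊤ := by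
  obtain ⟨P1, hP1, hB, hL⟩ := P.cond1
  obtain ⟨P2, hP2, -, hC⟩ := P.cond2
  have hcomm : P2⁻¹ * P.As * P2 * (P2⁻¹ * P1) =
      P2⁻¹ * P1 * diagonal (P1⁻¹ * P.As * P1).diag := by
    rw [hL.diagonal_diag]
    simp only [Matrix.mul_assoc, mul_nonsing_inv_cancel_left _ _ ((isUnit_iff_isUnit_det _).mp hP1),
      mul_nonsing_inv_cancel_left _ _ ((isUnit_iff_isUnit_det _).mp hP2)]
  have hinj := hC.injective_of_mul_eq_mul_diagonal
    ((isUnit_nonsing_inv_iff.mpr hP2).mul hP1) hcomm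
  refine adjoin_pair_conj_eq_top hP1 ?_
  rw [← hL.diagonal_diag]
  exact hB.adjoin_diagonal_eq_top hinj

theorem exists_antiautomorphism : ∃ f : Matrix (Fin (d+1)) (Fin (d+1)) K ≃ₗ[K] _,
    (∀ X Y, f (X * Y) = f Y * f X) ∧ f P.A = P.A ∧ f P.As = P.As := by
  obtain ⟨P1, hP1, hB, hL⟩ := P.cond1
  obtain ⟨δ, hδ, hBδ⟩ := hB.exists_diagonal_mul_transpose_eq
  have hLδ : diagonal δ * (P1⁻¹ * P.As * P1)ᵀ = P1⁻¹ * P.As * P1 * diagonal δ := by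
    rw [← hL.diagonal_diag, diagonal_transpose]
    exact commute_diagonal _ _
  have hQ : IsUnit (P1 * diagonal δ * P1ᵀ) :=
    (hP1.mul (isUnit_diagonal.mpr (Pi.isUnit_iff.mpr fun i => (hδ i).isUnit))).mul
      ((isUnit_transpose _).mpr hP1)
  obtain ⟨f, hf, hfix⟩ := exists_antiautomorphism_fixing_of_isUnit hQ
  exact ⟨f, hf, hfix _ (mul_transpose_comm_of_conj hP1 hBδ),
    hfix _ (mul_transpose_comm_of_conj hP1 hLδ)⟩

theorem apply_apply_eq_self {f g : Matrix (Fin (d+1)) (Fin (d+1)) K ≃ₗ[K] _}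
    (hf : ∀ X Y, f (X * Y) = f Y * f X) (hfA : f P.A = P.A) (hfAs : f P.As = P.As)
    (hg : ∀ X Y, g (X * Y) = g Y * g X) (hgA : g P.A = P.A) (hgAs : g P.As = P.As)
    (X : Matrix (Fin (d+1)) (Fin (d+1)) K) : f (g X) = X :=
  LinearEquiv.apply_apply_eq_self_of_adjoin_eq_top P.adjoin_eq_top hf hg
    (by simp [hfA, hfAs]) (by simp [hgA, hgAs]) X

end LeonardPair

end

theorem stmt7 {K : Type*} [Field K] {d : ℕ} (P : LeonardPair K d) :
    (∃! f : Matrix (Fin (d+1)) (Fin (d+1)) K ≃ₗ[K] Matrix (Fin (d+1)) (Fin (d+1)) K,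
      (∀ X Y, f (X * Y) = f Y * f X) ∧ f P.A = P.A ∧ f P.As = P.As) ∧
    (∀ f : Matrix (Fin (d+1)) (Fin (d+1)) K ≃ₗ[K] Matrix (Fin (d+1)) (Fin (d+1)) K,
      (∀ X Y, f (X * Y) = f Y * f X) → f P.A = P.A → f P.As = P.As →
      ∀ X, f (f X) = X) := by
  obtain ⟨f, hf, hfA, hfAs⟩ := P.exists_antiautomorphism
  refine ⟨⟨f, ⟨hf, hfA, hfAs⟩, fun g ⟨hg, hgA, hgAs⟩ => LinearEquiv.ext fun X => ?_⟩,
    fun g hg hgA hgAs => P.apply_apply_eq_self hg hgA hgAs hg hgA hgAs⟩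
  calc g X = f (f (g X)) := (P.apply_apply_eq_self hf hfA hfAs hf hfA hfAs _).symm
    _ = f X := by rw [P.apply_apply_eq_self hf hfA hfAs hg hgA hgAs]
end

section
/- Let Φ be a Leonard system with scalars a_i = tr(E*_i A) and x_i = tr(E*_i A E*_{i−1} A), and define monic polynomials p_0, …, p_{d+1} ∈ K[λ] by p_0 = 1 and λ p_i = p_{i+1} + a_i p_i + x_i p_{i−1} (0 ≤ i ≤ d, with x_0 = 0, p_{−1} = 0). Then p_{d+1} is both the minimal polynomial and the characteristic polynomial of A, and p_{d+1} = ∏_{i=0}^d (λ − θ_i), where θ_0, …, θ_d are the eigenvalues of A in the ordering given by E_0, …, E_d. -/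
open Matrix Polynomial

/-! Pick `0 ≠ v ∈ E*₀V` and put `w₀ = v`, `w_{i+1} = E*_{i+1} A w_i`. Each `E*_i` has rank
one, so `E*_i M E*_i = tr(E*_i M) E*_i` for every `M`; as
`A E*_iV ⊆ E*_{i-1}V + E*_iV + E*_{i+1}V`, this gives `A w_i = w_{i+1} + a_i w_i + x_i w_{i-1}`.
Hence `p_i(A) v = w_i`, and `p_{d+1}(A) v = 0` because `E*_{d+1} = 0`. The vectors
`w_0, …, w_d` are nonzero by irreducibility and lie in the distinct lines `E*_iV`, so they form
a basis, and `p_{d+1}(A) w_j = p_j(A) p_{d+1}(A) v = 0`. Finally, a monic polynomial of degree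
`d + 1` annihilating a matrix with `d + 1` distinct eigenvalues `θ_i` is its minimal and its
characteristic polynomial, both equal to `∏ (λ - θ_i)`. -/

section LinearAlgebra

variable {R K : Type*} [CommRing R] [Field K] {n ι : Type*} [Fintype n]

theorem Matrix.vecMulVec_mul_mul_vecMulVec (u φ : n → R) (M : Matrix n n R) :
    vecMulVec u φ * M * vecMulVec u φ = trace (vecMulVec u φ * M) • vecMulVec u φ := by
  rw [vecMulVec_mul, vecMulVec_mul_vecMulVec, trace_vecMulVec, vecMulVec_smul, dotProduct_comm]

theorem Matrix.mulVec_mulVec_eq_trace_smul {E M : Matrix n n R} {u φ v : n → R}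
    (hE : E = vecMulVec u φ) (hv : E *ᵥ v = v) : E *ᵥ (M *ᵥ v) = trace (E * M) • v := by
  conv_lhs => rw [← hv]
  rw [mulVec_mulVec, mulVec_mulVec, hE, vecMulVec_mul_mul_vecMulVec, smul_mulVec, ← hE, hv]

theorem Matrix.mulVec_ne_zero_of_mul_ne_zero {B E : Matrix n n K} {u φ v : n → K}
    (hE : E = vecMulVec u φ) (hv : E *ᵥ v = v) (hv0 : v ≠ 0) (hBE : B * E ≠ 0) :
    B *ᵥ v ≠ 0 := by
  have hv' : v = (φ ⬝ᵥ v) • u := by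
    conv_lhs => rw [← hv]
    rw [hE, vecMulVec_mulVec, op_smul_eq_smul]
  have hBu : B *ᵥ u ≠ 0 := fun h => hBE (by rw [hE, mul_vecMulVec, h, zero_vecMulVec])
  have hc : φ ⬝ᵥ v ≠ 0 := fun h => hv0 (by rw [hv', h, zero_smul])
  rw [hv', mulVec_smul]
  exact smul_ne_zero hc hBu

theorem Matrix.exists_ne_zero_mulVec_eq_self [DecidableEq n] {E : Matrix n n K}
    (hE : IsIdempotentElem E) (hne : E ≠ 0) : ∃ u, u ≠ 0 ∧ E *ᵥ u = u := by
  obtain ⟨j, hj⟩ : ∃ j, E *ᵥ Pi.single j 1 ≠ 0 := by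
    by_contra! h
    exact hne (ext_of_mulVec_single fun j => by rw [h j, zero_mulVec])
  exact ⟨_, hj, by rw [mulVec_mulVec, hE.eq]⟩

theorem Matrix.linearIndependent_of_mulVec_eq_ite [Fintype ι] [DecidableEq ι]
    {E : ι → Matrix n n K} {v : ι → n → K}
    (hv : ∀ i j, E i *ᵥ v j = if i = j then v j else 0) (hne : ∀ i, v i ≠ 0) :
    LinearIndependent K v := by
  rw [Fintype.linearIndependent_iff]
  intro g hg i
  have h := congrArg (E i *ᵥ ·) hg
  simp only [mulVec_sum, mulVec_smul, hv, smul_ite, smul_zero, Finset.sum_ite_eq,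
    Finset.mem_univ, if_true, mulVec_zero] at h
  exact (smul_eq_zero.mp h).resolve_right (hne i)

theorem LinearIndependent.matrix_eq_zero_of_mulVec_eq_zero [Fintype ι] [DecidableEq n]
    {M : Matrix n n K} {v : ι → n → K} (hli : LinearIndependent K v)
    (hcard : Fintype.card ι = Fintype.card n) (hM : ∀ i, M *ᵥ v i = 0) : M = 0 := by
  let b := basisOfLinearIndependentOfCardEqFinrank' v hli (by simp [hcard])
  have : Matrix.toLin' M = 0 := b.ext fun i => by simpa [b] using hM i
  simpa using this

theorem OrthogonalIdempotents.exists_eq_vecMulVec [Fintype ι] [DecidableEq ι] [DecidableEq n]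
    {E : ι → Matrix n n K} (hE : OrthogonalIdempotents E) (hne : ∀ i, E i ≠ 0)
    (hcard : Fintype.card ι = Fintype.card n) (i : ι) : ∃ u φ, E i = vecMulVec u φ := by
  choose u hu0 hu using fun j => Matrix.exists_ne_zero_mulVec_eq_self (hE.idem j) (hne j)
  have hEu : ∀ i j, E i *ᵥ u j = if i = j then u j else 0 := by
    intro i j
    rw [← hu j, Matrix.mulVec_mulVec, hE.mul_eq]
    split_ifs with h
    · rw [h]
    · exact Matrix.zero_mulVec _
  let b := basisOfLinearIndependentOfCardEqFinrank' u
    (Matrix.linearIndependent_of_mulVec_eq_ite hEu hu0) (by simp [hcard])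
  have hb : ⇑b = u := coe_basisOfLinearIndependentOfCardEqFinrank' ..
  refine ⟨u i, fun k => b.repr (Pi.single k 1) i, Matrix.ext_of_mulVec_single fun k => ?_⟩
  conv_lhs => rw [← b.sum_repr (Pi.single k 1)]
  simp only [hb, Matrix.mulVec_sum, Matrix.mulVec_smul, hEu, smul_ite, smul_zero,
    Finset.sum_ite_eq, Finset.mem_univ, if_true, Matrix.vecMulVec_mulVec, dotProduct_single,
    mul_one, op_smul_eq_smul]

end LinearAlgebra

section Polynomials

variable {K : Type*} [Field K]

theorem Polynomial.aeval_mul_eq_eval_smul {R : Type*} [Ring R] [Algebra K R]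
    {a e : R} {θ : K} (h : a * e = θ • e) (q : K[X]) : aeval a q * e = q.eval θ • e := by
  have := Module.End.aeval_apply_of_mem_apply_eq_smul (f := Algebra.lmul K R a) (p := q) h
  rwa [Polynomial.aeval_algHom_apply] at this

theorem minpoly.isRoot_of_mul_eq_smul {R : Type*} [Ring R] [Algebra K R] {a e : R} {θ : K}
    (h : a * e = θ • e) (he : e ≠ 0) : (minpoly K a).IsRoot θ := by
  have := aeval_mul_eq_eval_smul h (minpoly K a)
  rw [minpoly.aeval, zero_mul, eq_comm, smul_eq_zero] at this
  exact this.resolve_right he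

variable {n ι : Type*} [Fintype n] [DecidableEq n] [Fintype ι] {A : Matrix n n K} {θ : ι → K}

theorem Matrix.prod_X_sub_C_dvd_minpoly (hθ : Function.Injective θ)
    (hroot : ∀ i, (minpoly K A).IsRoot (θ i)) : ∏ i, (X - C (θ i)) ∣ minpoly K A :=
  Fintype.prod_dvd_of_coprime (pairwise_coprime_X_sub_C hθ) fun i => dvd_iff_isRoot.mpr (hroot i)

theorem Matrix.charpoly_eq_prod_of_isRoot_minpoly (hθ : Function.Injective θ)
    (hcard : Fintype.card ι = Fintype.card n) (hroot : ∀ i, (minpoly K A).IsRoot (θ i)) :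
    A.charpoly = ∏ i, (X - C (θ i)) :=
  eq_of_monic_of_dvd_of_natDegree_le (monic_prod_of_monic _ _ fun i _ => monic_X_sub_C (θ i))
    A.charpoly_monic ((prod_X_sub_C_dvd_minpoly hθ hroot).trans A.minpoly_dvd_charpoly)
    (by simp [hcard])

theorem Matrix.minpoly_eq_prod_of_isRoot_minpoly (hθ : Function.Injective θ)
    (hcard : Fintype.card ι = Fintype.card n) (hroot : ∀ i, (minpoly K A).IsRoot (θ i)) :
    minpoly K A = ∏ i, (X - C (θ i)) :=
  eq_of_monic_of_dvd_of_natDegree_le (monic_prod_of_monic _ _ fun i _ => monic_X_sub_C (θ i))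
    (minpoly.monic (Algebra.IsIntegral.isIntegral A)) (prod_X_sub_C_dvd_minpoly hθ hroot)
    (by
      rw [← charpoly_eq_prod_of_isRoot_minpoly hθ hcard hroot]
      exact natDegree_le_of_dvd A.minpoly_dvd_charpoly A.charpoly_monic.ne_zero)

end Polynomials

section ThreeTermRecurrence

variable {R : Type*} [CommRing R] {N : ℕ} {a x : ℕ → R} {p : ℕ → R[X]}

theorem Polynomial.monic_and_natDegree_eq_of_recurrence [Nontrivial R] (hp0 : p 0 = 1)
    (hrec : ∀ i ≤ N, X * p i = p (i + 1) + C (a i) * p i + C (x i) * p (i - 1)) :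
    ∀ k ≤ N + 1, (p k).Monic ∧ (p k).natDegree = k := by
  intro k
  induction k using Nat.strong_induction_on with
  | _ k ih =>
    intro hk
    rcases k with _ | k
    · simp [hp0]
    obtain ⟨hmon, hdeg⟩ := ih k (by omega) (by omega)
    have hdeg' : (p (k - 1)).natDegree ≤ k :=
      (ih (k - 1) (by omega) (by omega)).2.le.trans (by omega)
    have hp : p (k + 1) = (X - C (a k)) * p k - C (x k) * p (k - 1) := by
      rw [sub_mul, hrec k (by omega)]
      ring
    have hlead : ((X - C (a k)) * p k).Monic := (monic_X_sub_C _).mul hmon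
    have hleadDeg : ((X - C (a k)) * p k).natDegree = k + 1 := by
      rw [(monic_X_sub_C _).natDegree_mul hmon, natDegree_X_sub_C, hdeg, add_comm]
    have hlt : (C (x k) * p (k - 1)).natDegree < ((X - C (a k)) * p k).natDegree :=
      (natDegree_C_mul_le _ _).trans_lt (by omega)
    rw [hp]
    exact ⟨hlead.sub_of_left (degree_lt_degree hlt),
      (natDegree_sub_eq_left_of_natDegree_lt hlt).trans hleadDeg⟩

theorem Matrix.aeval_mulVec_eq_of_recurrence {n : Type*} [Fintype n] [DecidableEq n]
    {A : Matrix n n R} {w : ℕ → n → R}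
    (hw : ∀ i ≤ N, A *ᵥ w i = w (i + 1) + a i • w i + x i • w (i - 1)) (hp0 : p 0 = 1)
    (hrec : ∀ i ≤ N, X * p i = p (i + 1) + C (a i) * p i + C (x i) * p (i - 1)) :
    ∀ k ≤ N + 1, aeval A (p k) *ᵥ w 0 = w k := by
  intro k
  induction k using Nat.strong_induction_on with
  | _ k ih =>
    intro hk
    rcases k with _ | k
    · simp [hp0]
    have hp : p (k + 1) = X * p k - C (a k) * p k - C (x k) * p (k - 1) := by
      rw [hrec k (by omega)]
      ring
    rw [hp]
    simp only [map_sub, map_mul, aeval_X, aeval_C, sub_mulVec, ← mulVec_mulVec,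
      Algebra.algebraMap_eq_smul_one, smul_mulVec, one_mulVec]
    rw [ih k (by omega) (by omega), ih (k - 1) (by omega) (by omega), hw k (by omega)]
    abel

end ThreeTermRecurrence

section NatIdx

variable {d : ℕ} {M : Type*}

theorem natIdx_of_lt [Zero M] (E : Fin (d + 1) → M) {k : ℕ} (h : k < d + 1) :
    natIdx E k = E ⟨k, h⟩ :=
  dif_pos h

theorem natIdx_of_le [Zero M] (E : Fin (d + 1) → M) {k : ℕ} (h : d + 1 ≤ k) :
    natIdx E k = 0 :=
  dif_neg (by omega)

theorem natIdx_mul_natIdx [MulZeroClass M] {E : Fin (d + 1) → M}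
    (hE : ∀ i j, E i * E j = if i = j then E i else 0) (k l : ℕ) :
    natIdx E k * natIdx E l = if k = l then natIdx E k else 0 := by
  by_cases hk : k < d + 1
  · by_cases hl : l < d + 1
    · simp [natIdx_of_lt E hk, natIdx_of_lt E hl, hE, Fin.ext_iff]
    · simp [natIdx_of_le E (not_lt.mp hl), show k ≠ l by omega]
  · simp [natIdx_of_le E (not_lt.mp hk)]

theorem sum_range_natIdx [AddCommMonoid M] (E : Fin (d + 1) → M) :
    ∑ k ∈ Finset.range (d + 1), natIdx E k = ∑ i, E i := by
  rw [← Fin.sum_univ_eq_sum_range]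
  exact Finset.sum_congr rfl fun i _ => natIdx_of_lt E i.isLt

end NatIdx

namespace LeonardSystem

variable {K : Type*} [Field K] {d : ℕ} (L : LeonardSystem K d)

theorem A_mul_E (i : Fin (d + 1)) : L.A * L.E i = L.θ i • L.E i := by
  simp [L.A_eq, Finset.sum_mul, L.E_mul]

theorem natIdx_Es_mul_natIdx_Es (k l : ℕ) :
    natIdx L.Es k * natIdx L.Es l = if k = l then natIdx L.Es k else 0 :=
  natIdx_mul_natIdx L.Es_mul k l

theorem natIdx_Es_mul_A_mul_eq_zero {k l : ℕ} (h : k + 1 < l ∨ l + 1 < k) :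
    natIdx L.Es k * L.A * natIdx L.Es l = 0 := by
  by_cases hk : k < d + 1
  · by_cases hl : l < d + 1
    · rw [natIdx_of_lt _ hk, natIdx_of_lt _ hl]
      exact L.EsAEs_zero _ _ h
    · rw [natIdx_of_le _ (not_lt.mp hl), mul_zero]
  · rw [natIdx_of_le _ (not_lt.mp hk), zero_mul, zero_mul]

theorem natIdx_Es_succ_mul_A_mul_ne_zero {k : ℕ} (h : k < d) :
    natIdx L.Es (k + 1) * L.A * natIdx L.Es k ≠ 0 := by
  rw [natIdx_of_lt _ (by omega : k + 1 < d + 1), natIdx_of_lt _ (by omega : k < d + 1)]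
  exact L.EsAEs_ne _ _ (Or.inr rfl)

theorem orthogonalIdempotents_Es_s11 : OrthogonalIdempotents L.Es :=
  ⟨fun i => by simp [IsIdempotentElem, L.Es_mul], fun i j hij => by simp [L.Es_mul, hij]⟩

theorem exists_natIdx_Es_eq_vecMulVec (k : ℕ) :
    ∃ u φ : Fin (d + 1) → K, natIdx L.Es k = vecMulVec u φ := by
  by_cases hk : k < d + 1
  · rw [natIdx_of_lt _ hk]
    exact L.orthogonalIdempotents_Es_s11.exists_eq_vecMulVec L.Es_ne rfl _
  · exact ⟨0, 0, by rw [natIdx_of_le _ (not_lt.mp hk), vecMulVec_zero]⟩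

-- At `m = 0` the truncated `m - 1` is `0`, so the sum runs over `{0, 1}` as it should.
theorem A_mulVec_eq_sum_Icc {m : ℕ} {v : Fin (d + 1) → K} (hv : natIdx L.Es m *ᵥ v = v) :
    L.A *ᵥ v = ∑ k ∈ Finset.Icc (m - 1) (m + 1), natIdx L.Es k *ᵥ (L.A *ᵥ v) := by
  calc L.A *ᵥ v = ∑ k ∈ Finset.range (d + 1), natIdx L.Es k *ᵥ (L.A *ᵥ v) := by
        rw [← sum_mulVec, sum_range_natIdx, L.Es_sum, one_mulVec]
    _ = ∑ᶠ k, natIdx L.Es k *ᵥ (L.A *ᵥ v) := by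
        refine (finsum_eq_sum_of_support_subset _ fun k hk => ?_).symm
        by_contra h
        simp_all [natIdx_of_le]
    _ = ∑ k ∈ Finset.Icc (m - 1) (m + 1), natIdx L.Es k *ᵥ (L.A *ᵥ v) := by
        refine finsum_eq_sum_of_support_subset _ fun k hk => ?_
        by_contra h
        rw [Finset.coe_Icc, Set.mem_Icc] at h
        apply Function.mem_support.mp hk
        rw [← hv, mulVec_mulVec, mulVec_mulVec,
          L.natIdx_Es_mul_A_mul_eq_zero (by omega), zero_mulVec]

section StandardSeq

def standardSeq (v : Fin (d + 1) → K) : ℕ → Fin (d + 1) → K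
  | 0 => v
  | k + 1 => natIdx L.Es (k + 1) *ᵥ (L.A *ᵥ standardSeq v k)

variable {L} {v : Fin (d + 1) → K}

theorem standardSeq_succ (v : Fin (d + 1) → K) (k : ℕ) :
    L.standardSeq v (k + 1) = natIdx L.Es (k + 1) *ᵥ (L.A *ᵥ L.standardSeq v k) :=
  rfl

theorem standardSeq_eq_zero (v : Fin (d + 1) → K) : L.standardSeq v (d + 1) = 0 := by
  rw [standardSeq_succ, natIdx_of_le _ le_rfl, zero_mulVec]

theorem natIdx_Es_mulVec_standardSeq (hv : L.Es 0 *ᵥ v = v) (k : ℕ) :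
    natIdx L.Es k *ᵥ L.standardSeq v k = L.standardSeq v k := by
  rcases k with _ | k
  · exact (congrArg (· *ᵥ v) (natIdx_of_lt L.Es (Nat.succ_pos d))).trans hv
  · rw [standardSeq_succ, mulVec_mulVec, L.natIdx_Es_mul_natIdx_Es, if_pos rfl]

theorem natIdx_Es_mulVec_standardSeq_of_ne (hv : L.Es 0 *ᵥ v = v) {k l : ℕ} (h : k ≠ l) :
    natIdx L.Es k *ᵥ L.standardSeq v l = 0 := by
  rw [← natIdx_Es_mulVec_standardSeq hv l, mulVec_mulVec, L.natIdx_Es_mul_natIdx_Es, if_neg h,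
    zero_mulVec]

theorem A_mulVec_standardSeq_zero (hv : L.Es 0 *ᵥ v = v) :
    L.A *ᵥ L.standardSeq v 0 =
      L.standardSeq v 1 + trace (natIdx L.Es 0 * L.A) • L.standardSeq v 0 := by
  obtain ⟨u, φ, hE⟩ := L.exists_natIdx_Es_eq_vecMulVec 0
  have hw := natIdx_Es_mulVec_standardSeq hv 0
  rw [L.A_mulVec_eq_sum_Icc hw, Nat.zero_sub, zero_add, Finset.sum_Icc_succ_top zero_le_one,
    Finset.Icc_self, Finset.sum_singleton, mulVec_mulVec_eq_trace_smul hE hw]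
  exact add_comm _ _

theorem A_mulVec_standardSeq_succ (hv : L.Es 0 *ᵥ v = v) (k : ℕ) :
    L.A *ᵥ L.standardSeq v (k + 1) =
      L.standardSeq v (k + 2) + trace (natIdx L.Es (k + 1) * L.A) • L.standardSeq v (k + 1) +
        trace (natIdx L.Es (k + 1) * L.A * natIdx L.Es k * L.A) • L.standardSeq v k := by
  obtain ⟨u, φ, hE⟩ := L.exists_natIdx_Es_eq_vecMulVec (k + 1)
  obtain ⟨u', φ', hE'⟩ := L.exists_natIdx_Es_eq_vecMulVec k
  have hw := natIdx_Es_mulVec_standardSeq hv (k + 1)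
  have hw' := natIdx_Es_mulVec_standardSeq hv k
  have hdown : natIdx L.Es k *ᵥ (L.A *ᵥ L.standardSeq v (k + 1)) =
      trace (natIdx L.Es (k + 1) * L.A * natIdx L.Es k * L.A) • L.standardSeq v k := by
    rw [standardSeq_succ, mulVec_mulVec _ L.A, mulVec_mulVec _ (L.A * _),
      mulVec_mulVec_eq_trace_smul hE' hw',
      show natIdx L.Es k * (L.A * natIdx L.Es (k + 1) * L.A) =
        natIdx L.Es k * L.A * (natIdx L.Es (k + 1) * L.A) by simp only [mul_assoc],
      trace_mul_comm]
    simp only [mul_assoc]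
  rw [L.A_mulVec_eq_sum_Icc hw, Nat.add_sub_cancel, Finset.sum_Icc_succ_top (by omega),
    Finset.sum_Icc_succ_top k.le_succ, Finset.Icc_self, Finset.sum_singleton,
    mulVec_mulVec_eq_trace_smul hE hw, hdown, ← standardSeq_succ]
  abel

theorem standardSeq_ne_zero (hv : L.Es 0 *ᵥ v = v) (hv0 : v ≠ 0) {k : ℕ} (hk : k ≤ d) :
    L.standardSeq v k ≠ 0 := by
  induction k with
  | zero => exact hv0
  | succ k ih =>
    obtain ⟨u, φ, hE⟩ := L.exists_natIdx_Es_eq_vecMulVec k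
    rw [standardSeq_succ, mulVec_mulVec]
    exact mulVec_ne_zero_of_mul_ne_zero hE (natIdx_Es_mulVec_standardSeq hv k) (ih (by omega))
      (L.natIdx_Es_succ_mul_A_mul_ne_zero (by omega))

theorem linearIndependent_standardSeq (hv : L.Es 0 *ᵥ v = v) (hv0 : v ≠ 0) :
    LinearIndependent K fun i : Fin (d + 1) => L.standardSeq v i := by
  refine linearIndependent_of_mulVec_eq_ite (E := fun i : Fin (d + 1) => natIdx L.Es i)
    (fun i j => ?_) fun i => standardSeq_ne_zero hv hv0 (Nat.lt_succ_iff.mp i.isLt)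
  split_ifs with h
  · rw [h, natIdx_Es_mulVec_standardSeq hv]
  · exact natIdx_Es_mulVec_standardSeq_of_ne hv (Fin.val_ne_of_ne h)

end StandardSeq

theorem aeval_A_eq_zero_of_recurrence (a x : ℕ → K)
    (ha : ∀ i : Fin (d + 1), a i = trace (L.Es i * L.A)) (hx0 : x 0 = 0)
    (hx : ∀ i : Fin (d + 1), 1 ≤ (i : ℕ) →
      x i = trace (L.Es i * L.A * natIdx L.Es ((i : ℕ) - 1) * L.A))
    (p : ℕ → K[X]) (hp0 : p 0 = 1)
    (hrec : ∀ i ≤ d, X * p i = p (i + 1) + C (a i) * p i + C (x i) * p (i - 1)) :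
    aeval L.A (p (d + 1)) = 0 := by
  obtain ⟨v, hv0, hv⟩ :=
    exists_ne_zero_mulVec_eq_self (L.orthogonalIdempotents_Es_s11.idem 0) (L.Es_ne 0)
  have hw : ∀ k ≤ d, L.A *ᵥ L.standardSeq v k =
      L.standardSeq v (k + 1) + a k • L.standardSeq v k + x k • L.standardSeq v (k - 1) := by
    rintro (_ | k) hk
    · simpa [hx0, ← ha 0, natIdx_of_lt] using A_mulVec_standardSeq_zero hv
    · have hk' : k + 1 < d + 1 := by omega
      simpa [ha ⟨k + 1, hk'⟩, hx ⟨k + 1, hk'⟩, natIdx_of_lt L.Es hk'] using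
        A_mulVec_standardSeq_succ hv k
  have hpw := Matrix.aeval_mulVec_eq_of_recurrence hw hp0 hrec
  refine (L.linearIndependent_standardSeq hv hv0).matrix_eq_zero_of_mulVec_eq_zero rfl fun j => ?_
  rw [← hpw j (by omega), mulVec_mulVec, ← map_mul, mul_comm, map_mul, ← mulVec_mulVec,
    hpw (d + 1) le_rfl, standardSeq_eq_zero, mulVec_zero]

end LeonardSystem

theorem stmt11 {K : Type*} [Field K] {d : ℕ} (L : LeonardSystem K d)
    (a x : ℕ → K)
    (ha : ∀ i : Fin (d+1), a (i:ℕ) = Matrix.trace (L.Es i * L.A))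
    (hx0 : x 0 = 0)
    (hx : ∀ i : Fin (d+1), 1 ≤ (i:ℕ) →
      x (i:ℕ) = Matrix.trace (L.Es i * L.A * natIdx L.Es ((i:ℕ) - 1) * L.A))
    (p : ℕ → Polynomial K) (hp0 : p 0 = 1)
    (hrec : ∀ i : ℕ, i ≤ d →
      Polynomial.X * p i = p (i+1) + Polynomial.C (a i) * p i + Polynomial.C (x i) * p (i-1))
    :
    p (d+1) = minpoly K L.A ∧
    p (d+1) = L.A.charpoly ∧
    p (d+1) = ∏ i : Fin (d+1), (Polynomial.X - Polynomial.C (L.θ i)) := by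
  have hann := L.aeval_A_eq_zero_of_recurrence a x ha hx0 hx p hp0 hrec
  have hroot i : (minpoly K L.A).IsRoot (L.θ i) :=
    minpoly.isRoot_of_mul_eq_smul (L.A_mul_E i) (L.E_ne i)
  have hmin := Matrix.minpoly_eq_prod_of_isRoot_minpoly L.θ_inj rfl hroot
  have hchar := Matrix.charpoly_eq_prod_of_isRoot_minpoly L.θ_inj rfl hroot
  obtain ⟨hmon, hdeg⟩ := monic_and_natDegree_eq_of_recurrence hp0 hrec (d + 1) le_rfl
  have hp : p (d + 1) = minpoly K L.A :=
    eq_of_monic_of_dvd_of_natDegree_le (minpoly.monic (Algebra.IsIntegral.isIntegral L.A)) hmon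
      (minpoly.dvd K L.A hann) (by simp [hmin, hdeg])
  exact ⟨hp, hp.trans (hmin.trans hchar.symm), hp.trans hmin⟩
end
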